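/- arXiv:0710.0938 — 6 statements merged into one kernel-verified Lean document; each statement's English description precedes it below -/
import Mathlib

section
/- Let (T⊕, T⊗) be a 3-homogeneous latin bitrade on finite sets A₁, A₂, A₃. Then T⊕ can be partitioned into three transversals, i.e., there exist pairwise disjoint transversals 𝔗₁, 𝔗₂, 𝔗₃ of T⊕ with T⊕ = 𝔗₁ ∪ 𝔗₂ ∪ 𝔗₃. -/
/-- `agreeCoord r a b` says the triples `a` and `b` agree in coordinate `r`. -/
def agreeCoord {A₁ A₂ A₃ : Type*} (r : Fin 3) (a b : A₁ × A₂ × A₃) : Prop :=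
  ![a.1 = b.1, a.2.1 = b.2.1, a.2.2 = b.2.2] r

/-- A partial latin square: any two triples agreeing in two coordinates are equal. -/
def IsPLS {A₁ A₂ A₃ : Type*} (T : Set (A₁ × A₂ × A₃)) : Prop :=
  ∀ a ∈ T, ∀ b ∈ T, ∀ r s : Fin 3, r ≠ s →
    agreeCoord r a b → agreeCoord s a b → a = b

/-- A latin bitrade `(Tp, Tm)`: two disjoint partial latin squares such that for each
triple of one and each pair of coordinates there is a unique triple of the other
agreeing with it in those two coordinates. -/
structure IsBitrade {A₁ A₂ A₃ : Type*} (Tp Tm : Set (A₁ × A₂ × A₃)) : Prop where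
  pls_left : IsPLS Tp
  pls_right : IsPLS Tm
  disj : Tp ∩ Tm = ∅
  r2 : ∀ a ∈ Tp, ∀ r s : Fin 3, r ≠ s →
    ∃! b, b ∈ Tm ∧ agreeCoord r a b ∧ agreeCoord s a b
  r3 : ∀ a ∈ Tm, ∀ r s : Fin 3, r ≠ s →
    ∃! b, b ∈ Tp ∧ agreeCoord r a b ∧ agreeCoord s a b

/-- A bitrade is 3-homogeneous if each row, column and symbol occurs in exactly
3 triples of `Tp`. -/
def ThreeHomogeneous {A₁ A₂ A₃ : Type*} (Tp : Set (A₁ × A₂ × A₃)) : Prop :=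
  (∀ x : A₁, {a ∈ Tp | a.1 = x}.ncard = 3) ∧
  (∀ y : A₂, {a ∈ Tp | a.2.1 = y}.ncard = 3) ∧
  (∀ z : A₃, {a ∈ Tp | a.2.2 = z}.ncard = 3)

/-- A transversal of `T`: a subset meeting each row exactly once, each column exactly
once, and whose triples have pairwise distinct symbols. -/
def IsTransversal {A₁ A₂ A₃ : Type*} (T S : Set (A₁ × A₂ × A₃)) : Prop :=
  S ⊆ T ∧
  (∀ x : A₁, {a ∈ S | a.1 = x}.ncard = 1) ∧
  (∀ y : A₂, {a ∈ S | a.2.1 = y}.ncard = 1) ∧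
  (∀ a ∈ S, ∀ b ∈ S, a.2.2 = b.2.2 → a = b)

/-! For `q ≠ q'`, `IsBitrade.rot q q'` sends `u ∈ Tp` to the triple of `Tm` agreeing with `u` off
coordinate `q`, and then back to the triple of `Tp` agreeing with that one off coordinate `q'`.
The row, column and symbol permutations `ρ = rot 2 1`, `γ = rot 0 2`, `σ = rot 1 0` are
fixed-point-free and satisfy `ρ γ σ = 1`; since every line of a 3-homogeneous bitrade has three
triples, they have order 3. So `⟨ρ, γ⟩` is a quotient of the triangle group
`Δ(3,3,3) = ⟨ρ, γ | ρ³, γ³, (ργ)³⟩ ≅ ℤ² ⋊ ℤ/3`, whose elements outside the translation lattice `ℤ²`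
are conjugates of `ρ^±1`, `γ^±1`, `σ^±1` and hence fix no triple. Therefore the exponent sum
mod 3 of words in `ρ, γ` descends to a colouring `c : Tp → ℤ/3` with `c (ρ u) = c (γ u) =
c (σ u) = c u + 1`. Each line is a single cycle of the corresponding permutation, so it meets each
colour class exactly once: the colour classes are three disjoint transversals. -/

theorem inv_eq_mul_self_of_pow_three {G : Type*} [Group G] {x : G} (hx : x ^ 3 = 1) :
    x⁻¹ = x * x :=
  inv_eq_of_mul_eq_one_right (by rw [← hx, pow_succ, pow_two, mul_assoc])

theorem IsConj.smul_ne_self {G X : Type*} [Group G] [MulAction G X] {a b : G} (hab : IsConj a b)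
    (ha : ∀ x : X, a • x ≠ x) (x : X) : b • x ≠ x := by
  obtain ⟨c, rfl⟩ := isConj_iff.mp hab
  intro hx
  apply ha (c⁻¹ • x)
  calc a • c⁻¹ • x = c⁻¹ • (c * a * c⁻¹) • x := by simp only [smul_smul]; group
    _ = c⁻¹ • x := by rw [hx]

theorem MulAction.exists_map_smul_eq_mul_of_stabilizer_le_ker {H M X : Type*} [Group H]
    [Group M] [MulAction H X] (φ : H →* M) (hφ : ∀ x : X, stabilizer H x ≤ φ.ker) :
    ∃ c : X → M, ∀ (g : H) (x : X), c (g • x) = φ g * c x := by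
  choose g hg using fun x : X => Quotient.mk_out (s := orbitRel H X) x
  replace hg (x : X) : g x • x = ⟦x⟧.out := hg x
  refine ⟨fun x => (φ (g x))⁻¹, fun h x => ?_⟩
  have horbit : (⟦h • x⟧ : Quotient (orbitRel H X)) = ⟦x⟧ := Quotient.sound (mem_orbit x h)
  have hfix : (g x)⁻¹ * g (h • x) * h ∈ stabilizer H x := by
    rw [mem_stabilizer_iff, mul_smul, mul_smul, hg (h • x), horbit, ← hg x, inv_smul_smul]
  have hker := hφ x hfix
  rw [MonoidHom.mem_ker, map_mul, map_mul, map_inv] at hker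
  calc (φ (g (h • x)))⁻¹ = φ h * ((φ (g x))⁻¹ * φ (g (h • x)) * φ h)⁻¹ * (φ (g x))⁻¹ := by group
    _ = φ h * (φ (g x))⁻¹ := by rw [hker]; group

theorem Equiv.Perm.pow_three_eq_one_of_ncard_fiber {α β : Type*} (π : Perm α) (f : α → β)
    (hf : ∀ x, f (π x) = f x) (hπ : ∀ x, π x ≠ x) (hcard : ∀ b, {x | f x = b}.ncard = 3) :
    π ^ 3 = 1 := by
  classical
  ext x
  set S := {y | f y = f x}
  have : Finite S := Set.finite_of_ncard_ne_zero (by rw [hcard]; norm_num)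
  have := Fintype.ofFinite S
  let τ : Perm S := π.subtypePerm fun y => by simp [S, hf]
  have hsupp : τ.support = Finset.univ :=
    Finset.eq_univ_of_forall fun y => mem_support.mpr fun hy => hπ y (congrArg Subtype.val hy)
  have hτ : τ.IsThreeCycle := by
    rw [← _root_.card_support_eq_three_iff, hsupp, Finset.card_univ, ← Nat.card_eq_fintype_card,
      Nat.card_coe_set_eq, hcard]
  have := congrArg (fun σ : Perm S => (σ ⟨x, rfl⟩ : α)) (pow_orderOf_eq_one τ)
  simpa [hτ.orderOf, τ, subtypePerm_pow] using this

theorem Set.ncard_sep_image_val {α : Type*} {T : Set α} (s : Set T) (p : α → Prop) :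
    {a ∈ Subtype.val '' s | p a}.ncard = {w ∈ s | p w}.ncard := by
  rw [← Set.ncard_image_of_injective _ Subtype.val_injective]
  congr 1
  ext a
  constructor
  · rintro ⟨⟨w, hw, rfl⟩, hp⟩
    exact ⟨w, ⟨hw, hp⟩, rfl⟩
  · rintro ⟨w, ⟨hw, hp⟩, rfl⟩
    exact ⟨⟨w, hw, rfl⟩, hp⟩

theorem Set.ncard_setOf_subtype_val {α : Type*} (T : Set α) (p : α → Prop) :
    {w : T | p w}.ncard = {a ∈ T | p a}.ncard := by
  simpa [Set.sep_univ] using (Set.ncard_sep_image_val (Set.univ : Set T) p).symm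

section Coloring

variable {α β : Type*}

theorem ncard_setOf_color_eq_and_eq_one (f : α → β) (π : α → α) (c : α → ZMod 3)
    (hf : ∀ x, f (π x) = f x) (hc : ∀ x, c (π x) = c x + 1) {b : β}
    (hb : {x | f x = b}.ncard = 3) (k : ZMod 3) : {x | c x = k ∧ f x = b}.ncard = 1 := by
  set F := {x | f x = b}
  have hsurj (k : ZMod 3) : ∃ x ∈ F, c x = k := by
    obtain ⟨x, hx⟩ := Set.nonempty_of_ncard_ne_zero (s := F) (by rw [hb]; norm_num)
    have : ∀ a b : ZMod 3, b = a ∨ b = a + 1 ∨ b = a + 1 + 1 := by decide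
    rcases this (c x) k with rfl | rfl | rfl
    · exact ⟨x, hx, rfl⟩
    · exact ⟨π x, (hf x).trans hx, hc x⟩
    · exact ⟨π (π x), (hf _).trans ((hf x).trans hx), by rw [hc, hc]⟩
  have himage : c '' F = Set.univ :=
    Set.eq_univ_of_forall fun k => (hsurj k).imp fun _ => id
  have hinj : Set.InjOn c F :=
    Set.injOn_of_ncard_image_eq (by rw [himage, Set.ncard_univ, Nat.card_zmod, hb])
      (Set.finite_of_ncard_ne_zero (by rw [hb]; norm_num))
  obtain ⟨x, hxF, hxk⟩ := hsurj k
  refine Set.ncard_eq_one.mpr ⟨x, Set.ext fun y => ⟨fun hy => ?_, ?_⟩⟩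
  · exact hinj hy.2 hxF (hy.1.trans hxk.symm)
  · rintro rfl
    exact ⟨hxk, hxF⟩

def colorClass {κ : Type*} {T : Set α} (c : T → κ) (k : κ) : Set α :=
  Subtype.val '' {w | c w = k}

theorem colorClass_partition {T : Set α} (c : T → ZMod 3) :
    colorClass c 0 ∩ colorClass c 1 = ∅ ∧ colorClass c 0 ∩ colorClass c 2 = ∅ ∧
      colorClass c 1 ∩ colorClass c 2 = ∅ ∧
      T = colorClass c 0 ∪ colorClass c 1 ∪ colorClass c 2 := by
  have hdisj {i j : ZMod 3} (hij : i ≠ j) : colorClass c i ∩ colorClass c j = ∅ := by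
    rw [colorClass, colorClass, ← Set.image_inter Subtype.val_injective, Set.image_eq_empty]
    exact Set.eq_empty_iff_forall_notMem.mpr fun w hw => hij (hw.1.symm.trans hw.2)
  refine ⟨hdisj (by decide), hdisj (by decide), hdisj (by decide), ?_⟩
  have hcover : ∀ k : ZMod 3, (k = 0 ∨ k = 1) ∨ k = 2 := by decide
  rw [colorClass, colorClass, colorClass, ← Set.image_union, ← Set.image_union]
  conv_lhs => rw [← Subtype.coe_image_univ T]
  congr 1
  exact (Set.eq_univ_of_forall fun w => hcover (c w)).symm

end Coloring

namespace VonDyck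

variable {G : Type*} [Group G] {ρ γ : G}

-- Generators of the translation lattice `ℤ²` of `Δ(3,3,3) = ⟨ρ, γ | ρ³, γ³, (ργ)³⟩`.
def translA (ρ γ : G) : G := γ * ρ⁻¹

def translB (ρ γ : G) : G := γ * ρ * γ

def transl (ρ γ : G) (i j : ℤ) : G := translA ρ γ ^ i * translB ρ γ ^ j

theorem translB_eq (hργ : (ρ * γ) ^ 3 = 1) : translB ρ γ = ρ⁻¹ * γ⁻¹ * ρ⁻¹ :=
  calc γ * ρ * γ = ρ⁻¹ * (ρ * γ) ^ 3 * γ⁻¹ * ρ⁻¹ := by rw [pow_succ, pow_two]; group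
    _ = ρ⁻¹ * γ⁻¹ * ρ⁻¹ := by rw [hργ]; group

theorem commute_translA_translB (hρ : ρ ^ 3 = 1) (hγ : γ ^ 3 = 1) (hργ : (ρ * γ) ^ 3 = 1) :
    Commute (translA ρ γ) (translB ρ γ) :=
  calc translA ρ γ * translB ρ γ = γ * (ρ⁻¹ * ρ⁻¹) * γ⁻¹ * ρ⁻¹ := by
        rw [translA, translB_eq hργ]; group
    _ = γ * ρ * (γ * γ) * ρ⁻¹ := by
        rw [← inv_eq_mul_self_of_pow_three hγ, ← mul_inv_rev, ← inv_eq_mul_self_of_pow_three hρ,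
          inv_inv]
    _ = translB ρ γ * translA ρ γ := by rw [translA, translB]; group

theorem rho_mul_translA (hρ : ρ ^ 3 = 1) (hργ : (ρ * γ) ^ 3 = 1) :
    ρ * translA ρ γ = (translB ρ γ)⁻¹ * ρ := by
  rw [translA, translB_eq hργ]
  simp only [mul_inv_rev, inv_inv]
  rw [inv_eq_mul_self_of_pow_three hρ]
  group

theorem rho_mul_translB (hρ : ρ ^ 3 = 1) (hγ : γ ^ 3 = 1) (hργ : (ρ * γ) ^ 3 = 1) :
    ρ * translB ρ γ = translA ρ γ * (translB ρ γ)⁻¹ * ρ :=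
  calc ρ * translB ρ γ = γ⁻¹ * ρ⁻¹ := by rw [translB_eq hργ]; group
    _ = γ * γ * (ρ * ρ) := by
        rw [inv_eq_mul_self_of_pow_three hγ, inv_eq_mul_self_of_pow_three hρ]
    _ = translA ρ γ * (translB ρ γ)⁻¹ * ρ := by rw [translA, translB_eq hργ]; group

theorem transl_mul_transl (hρ : ρ ^ 3 = 1) (hγ : γ ^ 3 = 1) (hργ : (ρ * γ) ^ 3 = 1)
    (i j i' j' : ℤ) : transl ρ γ i j * transl ρ γ i' j' = transl ρ γ (i + i') (j + j') := by
  simp only [transl, zpow_add]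
  rw [mul_assoc, ← mul_assoc (_ ^ j),
    ← ((commute_translA_translB hρ hγ hργ).zpow_zpow i' j).eq]
  simp only [mul_assoc]

theorem transl_inv (hρ : ρ ^ 3 = 1) (hγ : γ ^ 3 = 1) (hργ : (ρ * γ) ^ 3 = 1) (i j : ℤ) :
    (transl ρ γ i j)⁻¹ = transl ρ γ (-i) (-j) :=
  inv_eq_of_mul_eq_one_right <| by
    rw [transl_mul_transl hρ hγ hργ, add_neg_cancel, add_neg_cancel, transl, zpow_zero, zpow_zero,
      mul_one]

theorem rho_mul_transl (hρ : ρ ^ 3 = 1) (hγ : γ ^ 3 = 1) (hργ : (ρ * γ) ^ 3 = 1) (i j : ℤ) :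
    ρ * transl ρ γ i j = transl ρ γ j (-i - j) * ρ := by
  have hA : SemiconjBy ρ (translA ρ γ) (translB ρ γ)⁻¹ := rho_mul_translA hρ hργ
  have hB : SemiconjBy ρ (translB ρ γ) (translA ρ γ * (translB ρ γ)⁻¹) :=
    rho_mul_translB hρ hγ hργ
  calc ρ * transl ρ γ i j
      = (translB ρ γ)⁻¹ ^ i * ((translA ρ γ * (translB ρ γ)⁻¹) ^ j * ρ) := by
        rw [transl, ← mul_assoc, (hA.zpow_right i).eq, mul_assoc, (hB.zpow_right j).eq]
    _ = transl ρ γ 0 (-i) * transl ρ γ j (-j) * ρ := by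
        rw [(commute_translA_translB hρ hγ hργ).inv_right.mul_zpow]
        simp only [transl, inv_zpow', zpow_zero, one_mul, mul_assoc]
    _ = transl ρ γ j (-i - j) * ρ := by rw [transl_mul_transl hρ hγ hργ]; ring_nf

theorem conj_transl_mul_rho (hρ : ρ ^ 3 = 1) (hγ : γ ^ 3 = 1) (hργ : (ρ * γ) ^ 3 = 1)
    (s t d e : ℤ) : transl ρ γ s t * (transl ρ γ d e * ρ) * (transl ρ γ s t)⁻¹ =
      transl ρ γ (s + d - t) (s + 2 * t + e) * ρ := by
  rw [transl_inv hρ hγ hργ, mul_assoc, mul_assoc, rho_mul_transl hρ hγ hργ, ← mul_assoc,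
    ← mul_assoc, transl_mul_transl hρ hγ hργ, transl_mul_transl hρ hγ hργ]
  ring_nf

theorem gamma_eq_transl_mul_rho : γ = transl ρ γ 1 0 * ρ := by
  simp [transl, translA]

theorem inv_rho_mul_gamma_eq (hρ : ρ ^ 3 = 1) (hγ : γ ^ 3 = 1) (hργ : (ρ * γ) ^ 3 = 1) :
    (ρ * γ)⁻¹ = transl ρ γ 1 (-1) * ρ :=
  calc (ρ * γ)⁻¹ = γ⁻¹ * ρ⁻¹ := mul_inv_rev ρ γ
    _ = γ * γ * (ρ * ρ) := by
        rw [inv_eq_mul_self_of_pow_three hγ, inv_eq_mul_self_of_pow_three hρ]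
    _ = transl ρ γ 1 (-1) * ρ := by rw [transl, translA, translB_eq hργ]; group

theorem isConj_transl_mul_rho (hρ : ρ ^ 3 = 1) (hγ : γ ^ 3 = 1) (hργ : (ρ * γ) ^ 3 = 1)
    (i j : ℤ) :
    IsConj ρ (transl ρ γ i j * ρ) ∨ IsConj γ (transl ρ γ i j * ρ) ∨
      IsConj (ρ * γ)⁻¹ (transl ρ γ i j * ρ) := by
  -- `transl d e * ρ` is conjugate to `transl i j * ρ` as soon as `j - e ≡ i - d (mod 3)`;
  -- `(d, e) = (0, 0), (1, 0), (1, -1)` give `ρ`, `γ`, `(ρ * γ)⁻¹`.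
  have key (d e : ℤ) (hde : (j - e - (i - d)) % 3 = 0) :
      IsConj (transl ρ γ d e * ρ) (transl ρ γ i j * ρ) := by
    refine isConj_iff.mpr ⟨transl ρ γ (i - d + (j - e - (i - d)) / 3) ((j - e - (i - d)) / 3), ?_⟩
    rw [conj_transl_mul_rho hρ hγ hργ]
    congr 2 <;> omega
  rcases (by omega : (j - i) % 3 = 0 ∨ (j - i) % 3 = 1 ∨ (j - i) % 3 = 2) with hji | hji | hji
  · left
    simpa [transl] using key 0 0 (by omega)
  · right; right
    rw [inv_rho_mul_gamma_eq hρ hγ hργ]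
    exact key 1 (-1) (by omega)
  · right; left
    have := key 1 0 (by omega)
    rwa [← gamma_eq_transl_mul_rho] at this

def exponentSumMod3 : FreeGroup (Fin 2) →* Multiplicative (ZMod 3) :=
  FreeGroup.lift fun _ => .ofAdd 1

theorem exists_transl_mul_rho_pow (hρ : ρ ^ 3 = 1) (hγ : γ ^ 3 = 1) (hργ : (ρ * γ) ^ 3 = 1)
    (w : FreeGroup (Fin 2)) :
    ∃ i j : ℤ, ∃ k : ℕ, FreeGroup.lift ![ρ, γ] w = transl ρ γ i j * ρ ^ k ∧
      exponentSumMod3 w = .ofAdd (k : ZMod 3) := by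
  set f := (FreeGroup.lift ![ρ, γ]).prod exponentSumMod3
  let P (w : FreeGroup (Fin 2)) : Prop :=
    ∃ i j : ℤ, ∃ k : ℕ, f w = (transl ρ γ i j * ρ ^ k, .ofAdd (k : ZMod 3))
  have hgen (a : Fin 2) : f (.of a) = (transl ρ γ a 0 * ρ, .ofAdd 1) := by
    fin_cases a
    · simp [f, exponentSumMod3, transl]
    · simp [f, exponentSumMod3, ← gamma_eq_transl_mul_rho]
  have hcube (a : Fin 2) : f (.of a) ^ 3 = 1 := by
    have : Multiplicative.ofAdd (1 : ZMod 3) ^ 3 = 1 := by decide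
    fin_cases a <;> simp [f, exponentSumMod3, hρ, hγ, this]
  have step (a : Fin 2) (y : FreeGroup (Fin 2)) (hy : P y) : P (.of a * y) := by
    obtain ⟨i, j, k, hy⟩ := hy
    refine ⟨a + j, -i - j, k + 1, ?_⟩
    rw [map_mul, hy, hgen, Prod.mk_mul_mk, mul_assoc, ← mul_assoc ρ,
      rho_mul_transl hρ hγ hργ, ← mul_assoc, ← mul_assoc, transl_mul_transl hρ hγ hργ, mul_assoc,
      ← pow_succ']
    simp only [zero_add, Nat.cast_succ, ← ofAdd_add, add_comm (1 : ZMod 3)]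
  suffices P w by simpa [P, f, Prod.ext_iff] using this
  refine Subgroup.closure_induction_left (p := fun w _ => P w) ⟨0, 0, 0, ?_⟩ ?_ ?_
    (FreeGroup.closure_range_of _ ▸ Subgroup.mem_top w)
  · simp [transl, Prod.one_eq_mk]
  · rintro _ ⟨a, rfl⟩ y _ hy
    exact step a y hy
  · rintro _ ⟨a, rfl⟩ y _ hy
    obtain ⟨i, j, k, h⟩ := step a _ (step a y hy)
    refine ⟨i, j, k, ?_⟩
    rw [← h, map_mul, map_mul, map_mul, map_inv, inv_eq_mul_self_of_pow_three (hcube a), mul_assoc]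

theorem exponentSumMod3_eq_one_of_smul_eq {X : Type*} [MulAction G X] (hρ : ρ ^ 3 = 1)
    (hγ : γ ^ 3 = 1) (hργ : (ρ * γ) ^ 3 = 1) (hρX : ∀ x : X, ρ • x ≠ x)
    (hγX : ∀ x : X, γ • x ≠ x) (hργX : ∀ x : X, (ρ * γ) • x ≠ x) {w : FreeGroup (Fin 2)}
    {x : X} (hw : FreeGroup.lift ![ρ, γ] w • x = x) : exponentSumMod3 w = 1 := by
  have hfree (i j : ℤ) : (transl ρ γ i j * ρ) • x ≠ x := by
    rcases isConj_transl_mul_rho hρ hγ hργ i j with hc | hc | hc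
    · exact hc.smul_ne_self hρX x
    · exact hc.smul_ne_self hγX x
    · exact hc.smul_ne_self (fun y hy => hργX y (inv_smul_eq_iff.mp hy).symm) x
  have hne (v : FreeGroup (Fin 2)) (hv : FreeGroup.lift ![ρ, γ] v • x = x) :
      exponentSumMod3 v ≠ .ofAdd 1 := by
    obtain ⟨i, j, k, hψ, hφ⟩ := exists_transl_mul_rho_pow hρ hγ hργ v
    intro h1
    have hk : k % 3 = 1 := by
      rw [← ZMod.val_natCast, Multiplicative.ofAdd.injective (hφ.symm.trans h1)]
      rfl
    rw [hψ, pow_eq_pow_mod k hρ, hk, pow_one] at hv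
    exact hfree i j hv
  -- Exponent sum `2` is excluded by applying `hne` to `w⁻¹`.
  have key : ∀ m : Multiplicative (ZMod 3), m ≠ .ofAdd 1 → m⁻¹ ≠ .ofAdd 1 → m = 1 := by decide
  refine key _ (hne w hw) ?_
  rw [← map_inv]
  exact hne _ (by rw [map_inv, inv_smul_eq_iff, hw])

theorem exists_coloring {X : Type*} [MulAction G X] (hρ : ρ ^ 3 = 1)
    (hγ : γ ^ 3 = 1) (hργ : (ρ * γ) ^ 3 = 1) (hρX : ∀ x : X, ρ • x ≠ x)
    (hγX : ∀ x : X, γ • x ≠ x) (hργX : ∀ x : X, (ρ * γ) • x ≠ x) :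
    ∃ c : X → ZMod 3, ∀ x, c (ρ • x) = c x + 1 ∧ c (γ • x) = c x + 1 ∧
      c ((ρ * γ)⁻¹ • x) = c x + 1 := by
  let := MulAction.compHom X (FreeGroup.lift ![ρ, γ])
  obtain ⟨c, hc⟩ := MulAction.exists_map_smul_eq_mul_of_stabilizer_le_ker exponentSumMod3
    fun x w hw => exponentSumMod3_eq_one_of_smul_eq hρ hγ hργ hρX hγX hργX hw
  have hcol (w : FreeGroup (Fin 2)) (x : X) :
      (c (FreeGroup.lift ![ρ, γ] w • x)).toAdd = (c x).toAdd + (exponentSumMod3 w).toAdd := by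
    rw [add_comm, ← toAdd_mul, ← hc]
    rfl
  refine ⟨fun x => (c x).toAdd, fun x => ⟨?_, ?_, ?_⟩⟩
  · simpa [exponentSumMod3] using hcol (.of 0) x
  · simpa [exponentSumMod3] using hcol (.of 1) x
  · have h2 : (-1 + -1 : ZMod 3) = 1 := by decide
    simpa [exponentSumMod3, h2] using hcol (.of 0 * .of 1)⁻¹ x

end VonDyck

section Bitrade

variable {A₁ A₂ A₃ : Type*}

theorem agreeCoord_symm {r : Fin 3} {a b : A₁ × A₂ × A₃} (h : agreeCoord r a b) :
    agreeCoord r b a := by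
  fin_cases r <;> exact Eq.symm h

theorem agreeCoord_trans {r : Fin 3} {a b c : A₁ × A₂ × A₃} (hab : agreeCoord r a b)
    (hbc : agreeCoord r b c) : agreeCoord r a c := by
  fin_cases r <;> exact Eq.trans hab hbc

theorem eq_of_agreeCoord {a b : A₁ × A₂ × A₃} (h : ∀ r, agreeCoord r a b) : a = b :=
  Prod.ext (h 0) (Prod.ext (h 1) (h 2))

variable {Tp Tm : Set (A₁ × A₂ × A₃)}

theorem IsBitrade.symm (h : IsBitrade Tp Tm) : IsBitrade Tm Tp :=
  ⟨h.pls_right, h.pls_left, by rw [Set.inter_comm, h.disj], h.r3, h.r2⟩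

theorem Fin.three_add_one_ne_add_two (q : Fin 3) : q + 1 ≠ q + 2 := by
  revert q; decide

theorem Fin.three_ne_iff {p q : Fin 3} : p ≠ q ↔ p = q + 1 ∨ p = q + 2 := by
  revert p q; decide

namespace IsBitrade

variable (h : IsBitrade Tp Tm)

noncomputable def mate (q : Fin 3) (u : Tp) : Tm :=
  let hq := h.r2 u u.2 (q + 1) (q + 2) (Fin.three_add_one_ne_add_two q)
  ⟨hq.exists.choose, hq.exists.choose_spec.1⟩

theorem agreeCoord_mate {p q : Fin 3} (hpq : p ≠ q) (u : Tp) :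
    agreeCoord p (u : A₁ × A₂ × A₃) (h.mate q u) := by
  have := (h.r2 u u.2 (q + 1) (q + 2) (Fin.three_add_one_ne_add_two q)).exists.choose_spec.2
  obtain rfl | rfl := Fin.three_ne_iff.mp hpq
  exacts [this.1, this.2]

theorem mate_eq {q : Fin 3} {u : Tp} {v : Tm}
    (hv : ∀ p, p ≠ q → agreeCoord p (u : A₁ × A₂ × A₃) v) : h.mate q u = v := by
  have h₁ : q + 1 ≠ q := Fin.three_ne_iff.mpr (.inl rfl)
  have h₂ : q + 2 ≠ q := Fin.three_ne_iff.mpr (.inr rfl)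
  exact Subtype.ext <| (h.r2 u u.2 _ _ (Fin.three_add_one_ne_add_two q)).unique
    ⟨(h.mate q u).2, h.agreeCoord_mate h₁ u, h.agreeCoord_mate h₂ u⟩ ⟨v.2, hv _ h₁, hv _ h₂⟩

noncomputable def mateEquiv (q : Fin 3) : Tp ≃ Tm where
  toFun := h.mate q
  invFun := h.symm.mate q
  left_inv u := h.symm.mate_eq fun _ hp => agreeCoord_symm (h.agreeCoord_mate hp u)
  right_inv v := h.mate_eq fun _ hp => agreeCoord_symm (h.symm.agreeCoord_mate hp v)

noncomputable def rot (q q' : Fin 3) : Equiv.Perm Tp :=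
  (h.mateEquiv q).trans (h.mateEquiv q').symm

theorem rot_mul_rot (q q' q'' : Fin 3) : h.rot q q' * h.rot q'' q = h.rot q'' q' :=
  Equiv.ext fun u => by simp [rot]

theorem rot_inv (q q' : Fin 3) : (h.rot q q')⁻¹ = h.rot q' q :=
  Equiv.ext fun u => by simp [rot, Equiv.Perm.inv_def]

theorem agreeCoord_rot {p q q' : Fin 3} (hpq : p ≠ q) (hpq' : p ≠ q') (u : Tp) :
    agreeCoord p ((h.rot q q' u : Tp) : A₁ × A₂ × A₃) u :=
  agreeCoord_symm <| agreeCoord_trans (h.agreeCoord_mate hpq u) (h.symm.agreeCoord_mate hpq' _)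

theorem rot_apply_ne {q q' : Fin 3} (hqq' : q ≠ q') (u : Tp) : h.rot q q' u ≠ u := by
  intro hu
  have hmate : h.mate q' u = h.mate q u := ((Equiv.symm_apply_eq (h.mateEquiv q')).mp hu).symm
  have heq : (u : A₁ × A₂ × A₃) = h.mate q u := eq_of_agreeCoord fun p => by
    by_cases hp : p = q
    · subst hp
      rw [← hmate]
      exact h.agreeCoord_mate hqq' u
    · exact h.agreeCoord_mate hp u
  exact Set.eq_empty_iff_forall_notMem.mp h.disj _ ⟨heq ▸ u.2, heq ▸ (h.mate q u).2⟩

end IsBitrade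
end Bitrade

section Transversals

variable {A₁ A₂ A₃ : Type*} {Tp Tm : Set (A₁ × A₂ × A₃)}

theorem ThreeHomogeneous.ncard_row (h3 : ThreeHomogeneous Tp) (x : A₁) :
    {w : Tp | w.1.1 = x}.ncard = 3 :=
  (Set.ncard_setOf_subtype_val Tp _).trans (h3.1 x)

theorem ThreeHomogeneous.ncard_col (h3 : ThreeHomogeneous Tp) (y : A₂) :
    {w : Tp | w.1.2.1 = y}.ncard = 3 :=
  (Set.ncard_setOf_subtype_val Tp _).trans (h3.2.1 y)

theorem ThreeHomogeneous.ncard_symbol (h3 : ThreeHomogeneous Tp) (z : A₃) :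
    {w : Tp | w.1.2.2 = z}.ncard = 3 :=
  (Set.ncard_setOf_subtype_val Tp _).trans (h3.2.2 z)

theorem IsBitrade.exists_coloring (h : IsBitrade Tp Tm) (h3 : ThreeHomogeneous Tp) :
    ∃ c : Tp → ZMod 3, ∀ u, c (h.rot 2 1 u) = c u + 1 ∧ c (h.rot 0 2 u) = c u + 1 ∧
      c (h.rot 1 0 u) = c u + 1 := by
  have hρ : h.rot 2 1 ^ 3 = 1 :=
    (h.rot 2 1).pow_three_eq_one_of_ncard_fiber (fun w => w.1.1)
      (h.agreeCoord_rot (p := 0) (by decide) (by decide)) (h.rot_apply_ne (by decide))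
      h3.ncard_row
  have hγ : h.rot 0 2 ^ 3 = 1 :=
    (h.rot 0 2).pow_three_eq_one_of_ncard_fiber (fun w => w.1.2.1)
      (h.agreeCoord_rot (p := 1) (by decide) (by decide)) (h.rot_apply_ne (by decide))
      h3.ncard_col
  have hργ_eq : h.rot 2 1 * h.rot 0 2 = h.rot 0 1 := h.rot_mul_rot 2 1 0
  have hργ : h.rot 0 1 ^ 3 = 1 :=
    (h.rot 0 1).pow_three_eq_one_of_ncard_fiber (fun w => w.1.2.2)
      (h.agreeCoord_rot (p := 2) (by decide) (by decide)) (h.rot_apply_ne (by decide))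
      h3.ncard_symbol
  obtain ⟨c, hc⟩ := VonDyck.exists_coloring (X := Tp) hρ hγ (hργ_eq ▸ hργ)
    (h.rot_apply_ne (by decide)) (h.rot_apply_ne (by decide))
    (hργ_eq ▸ h.rot_apply_ne (by decide))
  refine ⟨c, fun u => ⟨(hc u).1, (hc u).2.1, ?_⟩⟩
  simpa [hργ_eq, h.rot_inv] using (hc u).2.2

theorem IsBitrade.isTransversal_colorClass (h : IsBitrade Tp Tm) (h3 : ThreeHomogeneous Tp)
    {c : Tp → ZMod 3} (hc : ∀ u, c (h.rot 2 1 u) = c u + 1 ∧ c (h.rot 0 2 u) = c u + 1 ∧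
      c (h.rot 1 0 u) = c u + 1) (k : ZMod 3) : IsTransversal Tp (colorClass c k) := by
  refine ⟨Subtype.coe_image_subset Tp _, fun x => ?_, fun y => ?_, ?_⟩
  · rw [colorClass, Set.ncard_sep_image_val]
    exact ncard_setOf_color_eq_and_eq_one (fun w : Tp => w.1.1) (h.rot 2 1) c
      (h.agreeCoord_rot (p := 0) (by decide) (by decide)) (fun u => (hc u).1) (h3.ncard_row x) k
  · rw [colorClass, Set.ncard_sep_image_val]
    exact ncard_setOf_color_eq_and_eq_one (fun w : Tp => w.1.2.1) (h.rot 0 2) c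
      (h.agreeCoord_rot (p := 1) (by decide) (by decide)) (fun u => (hc u).2.1) (h3.ncard_col y) k
  · rintro _ ⟨u, hu, rfl⟩ _ ⟨v, hv, rfl⟩ huv
    obtain ⟨z, hz⟩ := Set.ncard_eq_one.mp <|
      ncard_setOf_color_eq_and_eq_one (fun w : Tp => w.1.2.2) (h.rot 1 0) c
      (h.agreeCoord_rot (p := 2) (by decide) (by decide)) (fun u => (hc u).2.2)
      (h3.ncard_symbol u.1.2.2) k
    have hu' : u ∈ {w : Tp | c w = k ∧ w.1.2.2 = u.1.2.2} := ⟨hu, rfl⟩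
    have hv' : v ∈ {w : Tp | c w = k ∧ w.1.2.2 = u.1.2.2} := ⟨hv, huv.symm⟩
    rw [hz] at hu' hv'
    exact congrArg Subtype.val (hu'.trans hv'.symm)

end Transversals

theorem three_homogeneous_partition_into_transversals_general
    {A₁ A₂ A₃ : Type*}
    (Tp Tm : Set (A₁ × A₂ × A₃)) (h : IsBitrade Tp Tm)
    (h3 : ThreeHomogeneous Tp) :
    ∃ S₁ S₂ S₃ : Set (A₁ × A₂ × A₃),
      IsTransversal Tp S₁ ∧ IsTransversal Tp S₂ ∧ IsTransversal Tp S₃ ∧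
      S₁ ∩ S₂ = ∅ ∧ S₁ ∩ S₃ = ∅ ∧ S₂ ∩ S₃ = ∅ ∧
      Tp = S₁ ∪ S₂ ∪ S₃ := by
  obtain ⟨c, hc⟩ := h.exists_coloring h3
  exact ⟨colorClass c 0, colorClass c 1, colorClass c 2, h.isTransversal_colorClass h3 hc 0,
    h.isTransversal_colorClass h3 hc 1, h.isTransversal_colorClass h3 hc 2, colorClass_partition c⟩

/-- Any 3-homogeneous latin bitrade can be partitioned into three transversals. -/
theorem three_homogeneous_partition_into_transversals
    {A₁ A₂ A₃ : Type*} [Finite A₁] [Finite A₂] [Finite A₃]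
    (Tp Tm : Set (A₁ × A₂ × A₃)) (h : IsBitrade Tp Tm)
    (h3 : ThreeHomogeneous Tp) :
    ∃ S₁ S₂ S₃ : Set (A₁ × A₂ × A₃),
      IsTransversal Tp S₁ ∧ IsTransversal Tp S₂ ∧ IsTransversal Tp S₃ ∧
      S₁ ∩ S₂ = ∅ ∧ S₁ ∩ S₃ = ∅ ∧ S₂ ∩ S₃ = ∅ ∧
      Tp = S₁ ∪ S₂ ∪ S₃ :=
  three_homogeneous_partition_into_transversals_general Tp Tm h h3
end

section
/- Let (T⊕, T⊗) be a latin bitrade on finite sets A₁, A₂, A₃, and let τ₁, τ₂, τ₃ be the associated permutations of T⊕. Then for all i ≠ j in {1,2,3}, any cycle of τᵢ and any cycle of τⱼ have at most one common point; equivalently, if a and b are distinct elements of T⊕ lying in the same orbit of τᵢ and also in the same orbit of τⱼ with i ≠ j, this is impossible. -/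
/-- `IsBetaMap r β` says that the bijection `β : Tm ≃ Tp` sends each triple of `Tm`
to a triple of `Tp` agreeing with it in the two coordinates other than `r`
(this characterizes the bijection `β_r`). -/
def IsBetaMap {A₁ A₂ A₃ : Type*} {Tp Tm : Set (A₁ × A₂ × A₃)}
    (r : Fin 3) (β : Tm ≃ Tp) : Prop :=
  ∀ x : Tm, ∀ s : Fin 3, s ≠ r → agreeCoord s x.val (β x).val

theorem Equiv.Perm.SameCycle.of_forall_rel_apply {α : Type*} {σ : Equiv.Perm α}
    {R : α → α → Prop} (hR : Equivalence R) (hσ : ∀ x, R x (σ x)) {x y : α}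
    (h : σ.SameCycle x y) : R x y := by
  obtain ⟨n, rfl⟩ := h
  refine zpow_induction_left (P := fun g : Equiv.Perm α => ∀ x, R x (g x)) hR.refl
    (fun g hg x => hR.trans (hg x) (hσ (g x)))
    (fun g hg x => hR.trans (hg x) (hR.symm ?_)) n x
  simpa using hσ (σ⁻¹ (g x))

theorem agreeCoord_equivalence {A₁ A₂ A₃ : Type*} (r : Fin 3) :
    Equivalence (agreeCoord (A₁ := A₁) (A₂ := A₂) (A₃ := A₃) r) where
  refl a := by fin_cases r <;> simp [agreeCoord]
  symm := by fin_cases r <;> simp_all [agreeCoord, eq_comm]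
  trans := by fin_cases r <;> simp_all [agreeCoord]

section BetaMaps

variable {A₁ A₂ A₃ : Type*} {Tp Tm : Set (A₁ × A₂ × A₃)} {r s t : Fin 3}
  {βs βt : Tm ≃ Tp}

theorem IsBetaMap.agreeCoord_symm_trans_apply (hs : IsBetaMap s βs) (ht : IsBetaMap t βt)
    (hrs : r ≠ s) (hrt : r ≠ t) (x : Tp) :
    agreeCoord r x.val ((βs.symm.trans βt) x).val := by
  have hx := hs (βs.symm x) r hrs
  rw [Equiv.apply_symm_apply] at hx
  exact (agreeCoord_equivalence r).trans ((agreeCoord_equivalence r).symm hx)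
    (ht (βs.symm x) r hrt)

theorem IsBetaMap.agreeCoord_of_sameCycle_symm_trans (hs : IsBetaMap s βs)
    (ht : IsBetaMap t βt) (hrs : r ≠ s) (hrt : r ≠ t) {x y : Tp}
    (hxy : Equiv.Perm.SameCycle (βs.symm.trans βt) x y) : agreeCoord r x.val y.val :=
  hxy.of_forall_rel_apply (R := fun x y : Tp => agreeCoord r x.val y.val)
    ((agreeCoord_equivalence r).comap Subtype.val)
    (hs.agreeCoord_symm_trans_apply ht hrs hrt)

end BetaMaps

theorem tau_cycles_intersect_in_at_most_one_point_general
    {A₁ A₂ A₃ : Type*}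
    (Tp Tm : Set (A₁ × A₂ × A₃)) (h : IsBitrade Tp Tm)
    (β : Fin 3 → (Tm ≃ Tp)) (hβ : ∀ r : Fin 3, IsBetaMap r (β r))
    (τ : Fin 3 → Equiv.Perm Tp)
    (hτ1 : τ 0 = (β 1).symm.trans (β 2))
    (hτ2 : τ 1 = (β 2).symm.trans (β 0))
    (hτ3 : τ 2 = (β 0).symm.trans (β 1)) :
    ∀ i j : Fin 3, i ≠ j → ∀ a b : Tp,
      (τ i).SameCycle a b → (τ j).SameCycle a b → a = b := by
  -- each `τ k` is a product of two `β`'s that both fix coordinate `k`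
  have agree_of_sameCycle (k : Fin 3) {a b : Tp} (hab : (τ k).SameCycle a b) :
      agreeCoord k a.val b.val := by
    fin_cases k
    · exact (hβ 1).agreeCoord_of_sameCycle_symm_trans (hβ 2) (by decide) (by decide) (hτ1 ▸ hab)
    · exact (hβ 2).agreeCoord_of_sameCycle_symm_trans (hβ 0) (by decide) (by decide) (hτ2 ▸ hab)
    · exact (hβ 0).agreeCoord_of_sameCycle_symm_trans (hβ 1) (by decide) (by decide) (hτ3 ▸ hab)
  intro i j hij a b hi hj
  exact Subtype.ext (h.pls_left a.val a.property b.val b.property i j hij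
    (agree_of_sameCycle i hi) (agree_of_sameCycle j hj))

/-- For `i ≠ j`, a cycle of `τᵢ` and a cycle of `τⱼ` meet in at most one point:
distinct elements of `Tp` cannot lie in a common orbit of `τᵢ` and in a common
orbit of `τⱼ`. -/
theorem tau_cycles_intersect_in_at_most_one_point
    {A₁ A₂ A₃ : Type*} [Finite A₁] [Finite A₂] [Finite A₃]
    (Tp Tm : Set (A₁ × A₂ × A₃)) (h : IsBitrade Tp Tm)
    (β : Fin 3 → (Tm ≃ Tp)) (hβ : ∀ r : Fin 3, IsBetaMap r (β r))
    (τ : Fin 3 → Equiv.Perm Tp)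
    (hτ1 : τ 0 = (β 1).symm.trans (β 2))
    (hτ2 : τ 1 = (β 2).symm.trans (β 0))
    (hτ3 : τ 2 = (β 0).symm.trans (β 1)) :
    ∀ i j : Fin 3, i ≠ j → ∀ a b : Tp,
      (τ i).SameCycle a b → (τ j).SameCycle a b → a = b :=
  tau_cycles_intersect_in_at_most_one_point_general Tp Tm h β hβ τ hτ1 hτ2 hτ3
end

section
/- Let (T⊕, T⊗) be a nonempty latin bitrade on finite sets A₁, A₂, A₃, and let τ₁, τ₂, τ₃ be the associated permutations of T⊕. If the group generated by τ₁, τ₂, τ₃ acts transitively on T⊕, then the bitrade (T⊕, T⊗) is primary. -/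
/-- A latin bitrade is primary if it contains no proper nonempty sub-bitrade. -/
def IsPrimary {A₁ A₂ A₃ : Type*} (Tp Tm : Set (A₁ × A₂ × A₃)) : Prop :=
  ∀ Up Um : Set (A₁ × A₂ × A₃), Up.Nonempty → Up ⊆ Tp → Um ⊆ Tm →
    IsBitrade Up Um → Up = Tp ∧ Um = Tm

section

variable {A₁ A₂ A₃ : Type*}

open scoped Pointwise

lemma agreeCoord_comm {r : Fin 3} {a b : A₁ × A₂ × A₃} :
    agreeCoord r a b ↔ agreeCoord r b a := by
  fin_cases r <;> exact eq_comm

lemma Fin.exists_two_ne_of_three (r : Fin 3) :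
    ∃ s t : Fin 3, s ≠ t ∧ s ≠ r ∧ t ≠ r := by
  fin_cases r <;> decide

namespace IsBetaMap

variable {Tp Tm Up Um : Set (A₁ × A₂ × A₃)} {r : Fin 3} {β : Tm ≃ Tp}

lemma agreeCoord_symm_apply (hβ : IsBetaMap r β) (x : Tp) {s : Fin 3} (hs : s ≠ r) :
    agreeCoord s x.val (β.symm x).val := by
  simpa [agreeCoord_comm] using hβ (β.symm x) s hs

lemma apply_mem_of_subtrade (h : IsBitrade Tp Tm) (hU : IsBitrade Up Um) (hUp : Up ⊆ Tp)
    (hβ : IsBetaMap r β) {y : Tm} (hy : y.val ∈ Um) : (β y).val ∈ Up := by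
  obtain ⟨s, t, hst, hsr, htr⟩ := Fin.exists_two_ne_of_three r
  obtain ⟨b, ⟨hbU, hbs, hbt⟩, -⟩ := hU.r3 y.val hy s t hst
  obtain ⟨_, -, hunique⟩ := h.r3 y.val y.prop s t hst
  have hβy : (β y).val = b :=
    (hunique _ ⟨(β y).prop, hβ y s hsr, hβ y t htr⟩).trans
      (hunique _ ⟨hUp hbU, hbs, hbt⟩).symm
  exact hβy ▸ hbU

lemma symm_apply_mem_of_subtrade (h : IsBitrade Tp Tm) (hU : IsBitrade Up Um) (hUm : Um ⊆ Tm)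
    (hβ : IsBetaMap r β) {x : Tp} (hx : x.val ∈ Up) : (β.symm x).val ∈ Um := by
  obtain ⟨s, t, hst, hsr, htr⟩ := Fin.exists_two_ne_of_three r
  obtain ⟨b, ⟨hbU, hbs, hbt⟩, -⟩ := hU.r2 x.val hx s t hst
  obtain ⟨_, -, hunique⟩ := h.r2 x.val x.prop s t hst
  have hβx : (β.symm x).val = b :=
    (hunique _ ⟨(β.symm x).prop, hβ.agreeCoord_symm_apply x hsr,
      hβ.agreeCoord_symm_apply x htr⟩).trans (hunique _ ⟨hUm hbU, hbs, hbt⟩).symm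
  exact hβx ▸ hbU

lemma symm_trans_mem_stabilizer {r r' : Fin 3} {β' : Tm ≃ Tp} (h : IsBitrade Tp Tm)
    (hU : IsBitrade Up Um) (hUp : Up ⊆ Tp) (hUm : Um ⊆ Tm)
    (hβ : IsBetaMap r β) (hβ' : IsBetaMap r' β') :
    β.symm.trans β' ∈ MulAction.stabilizer (Equiv.Perm Tp) {x : Tp | x.val ∈ Up} := by
  have maps_to {γ γ' : Tm ≃ Tp} {q q' : Fin 3} (hγ : IsBetaMap q γ) (hγ' : IsBetaMap q' γ')
      {x : Tp} (hx : x.val ∈ Up) : (γ' (γ.symm x)).val ∈ Up :=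
    hγ'.apply_mem_of_subtrade h hU hUp (hγ.symm_apply_mem_of_subtrade h hU hUm hx)
  refine MulAction.mem_stabilizer_set.mpr fun x => ⟨fun hx => ?_, maps_to hβ hβ'⟩
  simpa using maps_to hβ' hβ hx

end IsBetaMap

lemma IsBitrade.val_mem_subtrade_iff_of_mem_closure {Tp Tm Up Um : Set (A₁ × A₂ × A₃)}
    (h : IsBitrade Tp Tm) (hU : IsBitrade Up Um) (hUp : Up ⊆ Tp) (hUm : Um ⊆ Tm)
    {β : Fin 3 → (Tm ≃ Tp)} (hβ : ∀ r : Fin 3, IsBetaMap r (β r)) {g : Equiv.Perm Tp}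
    (hg : g ∈ Subgroup.closure (Set.range fun p : Fin 3 × Fin 3 => (β p.1).symm.trans (β p.2)))
    (x : Tp) : (g x).val ∈ Up ↔ x.val ∈ Up := by
  have hstab : Subgroup.closure (Set.range fun p : Fin 3 × Fin 3 => (β p.1).symm.trans (β p.2))
      ≤ MulAction.stabilizer (Equiv.Perm Tp) {x : Tp | x.val ∈ Up} := by
    rw [Subgroup.closure_le]
    rintro _ ⟨⟨r, r'⟩, rfl⟩
    exact (hβ r).symm_trans_mem_stabilizer h hU hUp hUm (hβ r')
  exact MulAction.mem_stabilizer_set.mp (hstab hg) x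

end

theorem transitive_implies_primary_general
    {A₁ A₂ A₃ : Type*}
    (Tp Tm : Set (A₁ × A₂ × A₃)) (h : IsBitrade Tp Tm)
    (β : Fin 3 → (Tm ≃ Tp)) (hβ : ∀ r : Fin 3, IsBetaMap r (β r))
    (τ : Fin 3 → Equiv.Perm Tp)
    (hτ1 : τ 0 = (β 1).symm.trans (β 2))
    (hτ2 : τ 1 = (β 2).symm.trans (β 0))
    (hτ3 : τ 2 = (β 0).symm.trans (β 1))
    (htrans : ∀ a b : Tp, ∃ g ∈ Subgroup.closure {τ 0, τ 1, τ 2}, g a = b) :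
    IsPrimary Tp Tm := by
  intro Up Um ⟨a, ha⟩ hUp hUm hU
  have hgen : {τ 0, τ 1, τ 2} ⊆
      Set.range fun p : Fin 3 × Fin 3 => (β p.1).symm.trans (β p.2) := by
    rintro g (rfl | rfl | rfl)
    exacts [⟨(1, 2), hτ1.symm⟩, ⟨(2, 0), hτ2.symm⟩, ⟨(0, 1), hτ3.symm⟩]
  have hUp_eq : Up = Tp := by
    refine hUp.antisymm fun b hb => ?_
    obtain ⟨g, hg, hgab⟩ := htrans ⟨a, hUp ha⟩ ⟨b, hb⟩
    have hgUp := (h.val_mem_subtrade_iff_of_mem_closure hU hUp hUm hβ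
      (Subgroup.closure_mono hgen hg) ⟨a, hUp ha⟩).mpr ha
    rwa [hgab] at hgUp
  refine ⟨hUp_eq, hUm.antisymm fun y hy => ?_⟩
  have hβy : (β 0 ⟨y, hy⟩).val ∈ Up := hUp_eq ▸ (β 0 ⟨y, hy⟩).prop
  simpa using (hβ 0).symm_apply_mem_of_subtrade h hU hUm hβy

/-- If the group generated by `τ₁, τ₂, τ₃` acts transitively on `Tp`, then the
bitrade `(Tp, Tm)` is primary. -/
theorem transitive_implies_primary
    {A₁ A₂ A₃ : Type*} [Finite A₁] [Finite A₂] [Finite A₃]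
    (Tp Tm : Set (A₁ × A₂ × A₃)) (h : IsBitrade Tp Tm) (hne : Tp.Nonempty)
    (β : Fin 3 → (Tm ≃ Tp)) (hβ : ∀ r : Fin 3, IsBetaMap r (β r))
    (τ : Fin 3 → Equiv.Perm Tp)
    (hτ1 : τ 0 = (β 1).symm.trans (β 2))
    (hτ2 : τ 1 = (β 2).symm.trans (β 0))
    (hτ3 : τ 2 = (β 0).symm.trans (β 1))
    (htrans : ∀ a b : Tp, ∃ g ∈ Subgroup.closure {τ 0, τ 1, τ 2}, g a = b) :
    IsPrimary Tp Tm :=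
  transitive_implies_primary_general Tp Tm h β hβ τ hτ1 hτ2 hτ3 htrans
end

section
/- Let (T⊕, T⊗) be a 3-homogeneous latin bitrade on finite sets A₁, A₂, A₃ in which every element of each Aᵢ occurs in some triple of T⊕, and let τ₁, τ₂, τ₃ be the associated permutations of T⊕. Then for each i ∈ {1,2,3}, the number of orbits of τᵢ on T⊕ equals |T⊕|/3; in particular the numbers of orbits of τ₁, τ₂, τ₃ are all equal. -/
/-!
`τᵢ = βⱼ⁻¹βₖ` preserves coordinate `i`, since `βⱼ` and `βₖ` both do, and has no fixed point,
since a fixed point would be a triple lying in both `T⊕` and `T⊗`. So `τᵢ` permutes each of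
the 3-element classes of triples with a common `i`-th coordinate without fixed points, i.e. as a
3-cycle. Hence its orbits are exactly these classes: there are `|Aᵢ|` of them, and
`|T⊕| = 3 |Aᵢ|`.
-/

open Cardinal in
theorem Nat.card_eq_card_mul_of_card_fiber {α β : Type*} {f : α → β} {n : ℕ} (hn : n ≠ 0)
    (hfib : ∀ b, Nat.card {a // f a = b} = n) : Nat.card α = Nat.card β * n := by
  have hmk : ∀ b, #{a // f a = b} = n := fun b => by
    have : Finite {a // f a = b} := Nat.finite_of_card_ne_zero (by rw [hfib]; exact hn)
    rw [← Nat.cast_card, hfib]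
  rw [← Nat.card_congr (Equiv.sigmaFiberEquiv f), Nat.card, mk_sigma]
  simp [hmk, sum_const, Nat.card]

namespace Equiv.Perm

variable {α β : Type*}

theorem sameCycle_of_card_eq_three [Finite α] (hα : Nat.card α = 3) {σ : Perm α}
    (hσ : ∀ x, σ x ≠ x) (x y : α) : σ.SameCycle x y := by
  classical
  cases nonempty_fintype α
  have hsupp : σ.support = Finset.univ := by ext; simp [hσ]
  have h3 : σ.IsThreeCycle := by
    rw [← card_support_eq_three_iff, hsupp, Finset.card_univ, ← Nat.card_eq_fintype_card, hα]
  exact h3.isCycle.sameCycle (hσ x) (hσ y)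

theorem sameCycle_iff_of_card_fiber_eq_three {σ : Perm α} {f : α → β}
    (hσf : ∀ a, f (σ a) = f a) (hσ : ∀ a, σ a ≠ a) (hfib : ∀ b, Nat.card {a // f a = b} = 3)
    (a b : α) : σ.SameCycle a b ↔ f a = f b := by
  let τ : Perm {x // f x = f a} := σ.subtypePerm fun x => by rw [hσf]
  refine ⟨?_, fun hab => ?_⟩
  · rintro ⟨n, rfl⟩
    simpa [τ, subtypePerm_zpow] using ((τ ^ n) ⟨a, rfl⟩).2.symm
  · have : Finite {x // f x = f a} := Nat.finite_of_card_ne_zero (by rw [hfib]; decide)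
    have hτ : ∀ x, τ x ≠ x := fun x hx => hσ x (congrArg Subtype.val hx)
    exact sameCycle_subtypePerm.mp
      (sameCycle_of_card_eq_three (hfib (f a)) hτ ⟨a, rfl⟩ ⟨b, hab.symm⟩)

theorem ncard_cycles_eq_card_of_sameCycle_iff {σ : Perm α} {f : α → β}
    (hf : Function.Surjective f) (h : ∀ a b, σ.SameCycle a b ↔ f a = f b) :
    {o : Set α | ∃ a, o = {b | σ.SameCycle a b}}.ncard = Nat.card β := by
  have horbits :
      {o : Set α | ∃ a, o = {b | σ.SameCycle a b}} = Set.range fun c => f ⁻¹' {c} := by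
    ext o
    constructor
    · rintro ⟨a, rfl⟩
      exact ⟨f a, by ext b; simp [h, eq_comm]⟩
    · rintro ⟨c, rfl⟩
      obtain ⟨a, rfl⟩ := hf c
      exact ⟨a, by ext b; simp [h, eq_comm]⟩
  rw [horbits, Set.ncard_range_of_injective]
  exact fun c d hcd => Set.singleton_injective (hf.preimage_injective hcd)

theorem ncard_cycles_eq_card_div_three {σ : Perm α} {f : α → β}
    (hσf : ∀ a, f (σ a) = f a) (hσ : ∀ a, σ a ≠ a) (hfib : ∀ b, Nat.card {a // f a = b} = 3) :
    {o : Set α | ∃ a, o = {b | σ.SameCycle a b}}.ncard = Nat.card α / 3 := by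
  have hf : Function.Surjective f := fun b => by
    obtain ⟨⟨a, ha⟩⟩ := (Nat.card_pos_iff.mp (by rw [hfib b]; decide)).1
    exact ⟨a, ha⟩
  rw [ncard_cycles_eq_card_of_sameCycle_iff hf (sameCycle_iff_of_card_fiber_eq_three hσf hσ hfib),
    Nat.card_eq_card_mul_of_card_fiber three_ne_zero hfib, Nat.mul_div_cancel _ three_pos]

end Equiv.Perm

theorem eq_of_forall_agreeCoord {A₁ A₂ A₃ : Type*} {a b : A₁ × A₂ × A₃}
    (h : ∀ s, agreeCoord s a b) : a = b :=
  Prod.ext (h 0) (Prod.ext (h 1) (h 2))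

namespace IsBetaMap

variable {A₁ A₂ A₃ : Type*} {Tp Tm : Set (A₁ × A₂ × A₃)} {r s : Fin 3} {βr βs : Tm ≃ Tp}

theorem symm_trans_apply_ne (hdisj : Tp ∩ Tm = ∅) (hrs : r ≠ s)
    (hβr : IsBetaMap r βr) (hβs : IsBetaMap s βs) (a : Tp) : (βr.symm.trans βs) a ≠ a := by
  intro hfix
  rw [Equiv.trans_apply] at hfix
  have hagree : ∀ t, agreeCoord t (βr.symm a).val a.val := by
    intro t
    by_cases htr : t = r
    · simpa [hfix] using hβs (βr.symm a) t (htr ▸ hrs)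
    · simpa using hβr (βr.symm a) t htr
  have hmem : a.val ∈ Tp ∩ Tm := ⟨a.2, eq_of_forall_agreeCoord hagree ▸ (βr.symm a).2⟩
  simp [hdisj] at hmem

theorem map_symm_trans_apply {B : Type*} {t : Fin 3} (htr : t ≠ r) (hts : t ≠ s)
    (hβr : IsBetaMap r βr) (hβs : IsBetaMap s βs) {p : A₁ × A₂ × A₃ → B}
    (hp : ∀ a b, agreeCoord t a b → p a = p b) (a : Tp) :
    p ((βr.symm.trans βs) a) = p a := by
  have hr := hp _ _ (hβr (βr.symm a) t htr)
  have hs := hp _ _ (hβs (βr.symm a) t hts)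
  simp only [Equiv.apply_symm_apply] at hr
  simp only [Equiv.trans_apply, ← hs, hr]

theorem ncard_cycles_symm_trans {B : Type*} {t : Fin 3} (hdisj : Tp ∩ Tm = ∅) (hrs : r ≠ s)
    (htr : t ≠ r) (hts : t ≠ s) (hβr : IsBetaMap r βr) (hβs : IsBetaMap s βs)
    (p : A₁ × A₂ × A₃ → B) (hp : ∀ a b, agreeCoord t a b → p a = p b)
    (hfib : ∀ b, {a ∈ Tp | p a = b}.ncard = 3) :
    {o : Set Tp | ∃ a, o = {b | Equiv.Perm.SameCycle (βr.symm.trans βs) a b}}.ncard =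
      Tp.ncard / 3 := by
  have hfib' : ∀ b, Nat.card {a : Tp // p a = b} = 3 := fun b => by
    rw [← hfib b, ← Nat.card_coe_set_eq]
    exact Nat.card_congr (Equiv.subtypeSubtypeEquivSubtypeInter (· ∈ Tp) (p · = b))
  rw [← Nat.card_coe_set_eq]
  exact Equiv.Perm.ncard_cycles_eq_card_div_three (map_symm_trans_apply htr hts hβr hβs hp)
    (symm_trans_apply_ne hdisj hrs hβr hβs) hfib'

end IsBetaMap

theorem three_homogeneous_orbit_count_general
    {A₁ A₂ A₃ : Type*}
    (Tp Tm : Set (A₁ × A₂ × A₃)) (h : IsBitrade Tp Tm)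
    (h3 : ThreeHomogeneous Tp)
    (β : Fin 3 → (Tm ≃ Tp)) (hβ : ∀ r : Fin 3, IsBetaMap r (β r))
    (τ : Fin 3 → Equiv.Perm Tp)
    (hτ1 : τ 0 = (β 1).symm.trans (β 2))
    (hτ2 : τ 1 = (β 2).symm.trans (β 0))
    (hτ3 : τ 2 = (β 0).symm.trans (β 1)) :
    ∀ i : Fin 3,
      {o : Set Tp | ∃ a : Tp, o = {b : Tp | (τ i).SameCycle a b}}.ncard
        = Tp.ncard / 3 := by
  intro i
  match i with
  | 0 =>
    rw [hτ1]
    exact (hβ 1).ncard_cycles_symm_trans (t := 0) h.disj (by decide) (by decide)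
      (by decide) (hβ 2) Prod.fst (fun _ _ => id) h3.1
  | 1 =>
    rw [hτ2]
    exact (hβ 2).ncard_cycles_symm_trans (t := 1) h.disj (by decide) (by decide)
      (by decide) (hβ 0) (·.2.1) (fun _ _ => id) h3.2.1
  | 2 =>
    rw [hτ3]
    exact (hβ 0).ncard_cycles_symm_trans (t := 2) h.disj (by decide) (by decide)
      (by decide) (hβ 1) (·.2.2) (fun _ _ => id) h3.2.2

/-- For a 3-homogeneous bitrade (with no unused row, column or symbol labels),
the number of orbits of each `τᵢ` on `Tp` is `|Tp| / 3`; in particular the numbers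
of orbits of `τ₁`, `τ₂`, `τ₃` coincide. -/
theorem three_homogeneous_orbit_count
    {A₁ A₂ A₃ : Type*} [Finite A₁] [Finite A₂] [Finite A₃]
    (Tp Tm : Set (A₁ × A₂ × A₃)) (h : IsBitrade Tp Tm)
    (h3 : ThreeHomogeneous Tp)
    (hA1 : ∀ x : A₁, ∃ a ∈ Tp, a.1 = x)
    (hA2 : ∀ y : A₂, ∃ a ∈ Tp, a.2.1 = y)
    (hA3 : ∀ z : A₃, ∃ a ∈ Tp, a.2.2 = z)
    (β : Fin 3 → (Tm ≃ Tp)) (hβ : ∀ r : Fin 3, IsBetaMap r (β r))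
    (τ : Fin 3 → Equiv.Perm Tp)
    (hτ1 : τ 0 = (β 1).symm.trans (β 2))
    (hτ2 : τ 1 = (β 2).symm.trans (β 0))
    (hτ3 : τ 2 = (β 0).symm.trans (β 1)) :
    ∀ i : Fin 3,
      {o : Set Tp | ∃ a : Tp, o = {b : Tp | (τ i).SameCycle a b}}.ncard
        = Tp.ncard / 3 :=
  three_homogeneous_orbit_count_general Tp Tm h h3 β hβ τ hτ1 hτ2 hτ3
end

section
/- Let Ω be a finite nonempty set and τ₁, τ₂, τ₃ permutations of Ω satisfying (T1), (T2), (T3), (T4), and additionally τ₁³ = τ₂³ = τ₃³ = 1. Then there exists a map c : Ω → ℤ/3ℤ such that c(τᵢ(x)) = c(x) + 1 for all x ∈ Ω and all i ∈ {1,2,3}. -/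
/-!
Put `u = b * a⁻¹` and `v = a * u * a⁻¹`. The relations `a ^ 3 = b ^ 3 = c ^ 3 = c * b * a = 1`
make `u` and `v` commute and make conjugation by `a` act on `u ^ p * v ^ q` through the rotation
`rot` of order three of `ℤ²`: the group `⟨a, b, c⟩` is a quotient of the Euclidean triangle group
`ℤ² ⋊ ℤ/3`, and every element is `u ^ p * v ^ q * a ^ n`. If `n ≡ 1 (mod 3)` the element is
conjugate to `a`, `b` or `c`, because `ℤ² / (1 - rot) ℤ²` has order three with the translation
parts of `a`, `b`, `c` as representatives. So when `a`, `b`, `c` act without fixed points, an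
element with a fixed point has `n ≡ 0`, and for a transitive action the residue `n mod 3` of any
element carrying a base point to `x` is a well-defined colour of `x`.
-/

namespace TriangleGroup

def rot (t : ℤ × ℤ) : ℤ × ℤ := (-t.2, t.1 - t.2)

lemma rot_neg (t : ℤ × ℤ) : rot (-t) = -rot t := by
  simp only [rot, Prod.fst_neg, Prod.snd_neg, Prod.neg_mk, neg_sub_neg, neg_sub]

/-- `m - rot m = (r + s, 2 * s - r)` for `m = (r, s)`, so these differences form the sublattice
`p + q ≡ 0 [ZMOD 3]`, of index three. -/
lemma exists_eq_add_sub_rot (t : ℤ × ℤ) :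
    ∃ m e, e ∈ ({(0, 0), (1, 0), (0, -1)} : Set (ℤ × ℤ)) ∧ t = m + e - rot m := by
  obtain ⟨p, q⟩ := t
  rcases (by omega : (p + q) % 3 = 0 ∨ (p + q) % 3 = 1 ∨ (p + q) % 3 = 2) with h | h | h
  all_goals simp only [rot, Prod.ext_iff, Prod.fst_add, Prod.snd_add, Prod.fst_sub, Prod.snd_sub]
  · exact ⟨(p - (p + q) / 3, (p + q) / 3), (0, 0), by simp, by omega⟩
  · exact ⟨(p - 1 - (p + q) / 3, (p + q) / 3), (1, 0), by simp, by omega⟩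
  · exact ⟨(p - (p + q) / 3 - 1, (p + q) / 3 + 1), (0, -1), by simp, by omega⟩

variable {G : Type*} [Group G]

structure TriangleRelations (a b c : G) : Prop where
  pow_a : a ^ 3 = 1
  pow_b : b ^ 3 = 1
  pow_c : c ^ 3 = 1
  mul_eq_one : c * b * a = 1

def translation (a b : G) (t : ℤ × ℤ) : G := (b * a⁻¹) ^ t.1 * (a * (b * a⁻¹) * a⁻¹) ^ t.2

@[simp] lemma translation_zero (a b : G) : translation a b 0 = 1 := by simp [translation]

/-- In a proper quotient of the triangle group, `k` need not be determined by `g`. -/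
def HasRotationPart (a b g : G) (k : ZMod 3) : Prop :=
  ∃ (t : ℤ × ℤ) (n : ℕ), (n : ZMod 3) = k ∧ g = translation a b t * a ^ n

namespace TriangleRelations

variable {a b c : G} (h : TriangleRelations a b c)
include h

lemma commute : Commute (b * a⁻¹) (a * (b * a⁻¹) * a⁻¹) := by
  have hba : b * a * (b * a) * (b * a) = 1 := by
    have : b * a = c⁻¹ := eq_inv_of_mul_eq_one_right (by rw [← mul_assoc]; exact h.mul_eq_one)
    rw [this, ← pow_three', inv_pow, h.pow_c, inv_one]
  refine (?_ : _ = _).symm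
  -- `v * u * (u * v)⁻¹` is a product of conjugates of the relators `a ^ 3`, `(b * a) ^ 3`, `b ^ 3`.
  calc (a * (b * a⁻¹) * a⁻¹) * (b * a⁻¹)
      = a * b * (a ^ 3)⁻¹ * b⁻¹ * a⁻¹ * (a * (b * a * (b * a) * (b * a)) * a⁻¹) * (b ^ 3)⁻¹ *
          ((b * a⁻¹) * (a * (b * a⁻¹) * a⁻¹)) := by group
    _ = (b * a⁻¹) * (a * (b * a⁻¹) * a⁻¹) := by rw [h.pow_a, h.pow_b, hba]; group

lemma translation_add (s t : ℤ × ℤ) :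
    translation a b (s + t) = translation a b s * translation a b t := by
  simp only [translation, Prod.fst_add, Prod.snd_add, zpow_add]
  rw [(h.commute.zpow_zpow t.1 s.2).symm.mul_mul_mul_comm]

lemma translation_neg (t : ℤ × ℤ) : translation a b (-t) = (translation a b t)⁻¹ := by
  rw [eq_inv_iff_mul_eq_one, ← h.translation_add, neg_add_cancel, translation_zero]

lemma mul_translation (t : ℤ × ℤ) : a * translation a b t = translation a b (rot t) * a := by
  have hv : a * (a * (b * a⁻¹) * a⁻¹) * a⁻¹ = (b * a⁻¹ * (a * (b * a⁻¹) * a⁻¹))⁻¹ := by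
    calc _ = (b * a⁻¹ * (a * (b * a⁻¹) * a⁻¹))⁻¹ * b ^ 3 * (a ^ 3)⁻¹ := by
          simp only [mul_inv_rev, inv_inv, mul_assoc]; group
      _ = _ := by rw [h.pow_a, h.pow_b]; group
  calc a * translation a b t
      = (a * (b * a⁻¹) * a⁻¹) ^ t.1 * (a * (a * (b * a⁻¹) * a⁻¹) * a⁻¹) ^ t.2 * a := by
        rw [conj_zpow, conj_zpow, translation]; group
    _ = translation a b (rot t) * a := by
        rw [hv, inv_zpow', h.commute.mul_zpow, ← mul_assoc,
          (h.commute.zpow_zpow _ _).symm.eq, mul_assoc (_ ^ (-t.2)), ← zpow_add, ← sub_eq_add_neg]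
        rfl

lemma pow_mul_translation (n : ℕ) (t : ℤ × ℤ) :
    a ^ n * translation a b t = translation a b (rot^[n] t) * a ^ n := by
  induction n generalizing t with
  | zero => simp
  | succ n ih =>
    rw [pow_succ, mul_assoc, h.mul_translation, ← mul_assoc, ih, Function.iterate_succ_apply,
      mul_assoc]

lemma image_translation_mul :
    (fun e => translation a b e * a) '' {(0, 0), (1, 0), (0, -1)} = {a, b, c} := by
  have hc : translation a b (0, -1) * a = c := by
    calc _ = a ^ 3 * (c * b * a)⁻¹ * c := by simp only [translation, zpow_zero, one_mul]; group
      _ = c := by rw [h.mul_eq_one, h.pow_a]; group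
  rw [Set.image_insert_eq, Set.image_insert_eq, Set.image_singleton, hc]
  simp [translation]

lemma hasRotationPart_of_mem {s : G} (hs : s ∈ ({a, b, c} : Set G)) : HasRotationPart a b s 1 := by
  obtain ⟨e, -, rfl⟩ := h.image_translation_mul ▸ hs
  exact ⟨e, 1, Nat.cast_one, by rw [pow_one]⟩

lemma hasRotationPart_mul {g g' : G} {k k' : ZMod 3} (hg : HasRotationPart a b g k)
    (hg' : HasRotationPart a b g' k') : HasRotationPart a b (g * g') (k + k') := by
  obtain ⟨t, n, rfl, rfl⟩ := hg
  obtain ⟨t', n', rfl, rfl⟩ := hg'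
  refine ⟨t + rot^[n] t', n + n', by push_cast; rfl, ?_⟩
  rw [h.translation_add, pow_add, mul_assoc, ← mul_assoc (a ^ n), h.pow_mul_translation]
  group

lemma hasRotationPart_inv {g : G} {k : ZMod 3} (hg : HasRotationPart a b g k) :
    HasRotationPart a b g⁻¹ (-k) := by
  obtain ⟨t, n, rfl, rfl⟩ := hg
  have hinv : (a ^ n)⁻¹ = a ^ (2 * n) := by
    refine inv_eq_of_mul_eq_one_right ?_
    rw [← pow_add, show n + 2 * n = 3 * n by ring, pow_mul, h.pow_a, one_pow]
  have h3 : (3 : ZMod 3) = 0 := rfl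
  refine ⟨rot^[2 * n] (-t), 2 * n, ?_, ?_⟩
  · push_cast
    linear_combination (n : ZMod 3) * h3
  · rw [mul_inv_rev, hinv, ← h.translation_neg, h.pow_mul_translation]

lemma exists_hasRotationPart_of_mem_closure {g : G} (hg : g ∈ Subgroup.closure {a, b, c}) :
    ∃ k, HasRotationPart a b g k := by
  induction hg using Subgroup.closure_induction with
  | mem s hs => exact ⟨1, h.hasRotationPart_of_mem hs⟩
  | one => exact ⟨0, 0, 0, Nat.cast_zero, by simp⟩
  | mul g g' _ _ ihg ihg' =>
    obtain ⟨k, hk⟩ := ihg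
    obtain ⟨k', hk'⟩ := ihg'
    exact ⟨k + k', h.hasRotationPart_mul hk hk'⟩
  | inv g _ ihg =>
    obtain ⟨k, hk⟩ := ihg
    exact ⟨-k, h.hasRotationPart_inv hk⟩

lemma exists_conj_of_hasRotationPart_one {g : G} (hg : HasRotationPart a b g 1) :
    ∃ x, ∃ s ∈ ({a, b, c} : Set G), g = x * s * x⁻¹ := by
  obtain ⟨t, n, hn, rfl⟩ := hg
  have hn3 : n % 3 = 1 := by rw [← ZMod.val_natCast, hn]; rfl
  obtain ⟨m, e, he, rfl⟩ := exists_eq_add_sub_rot t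
  refine ⟨translation a b m, _, h.image_translation_mul ▸ Set.mem_image_of_mem _ he, ?_⟩
  rw [pow_eq_pow_mod n h.pow_a, hn3, pow_one, ← h.translation_neg, mul_assoc, mul_assoc,
    h.mul_translation, ← mul_assoc, ← mul_assoc, ← h.translation_add, ← h.translation_add,
    rot_neg, ← sub_eq_add_neg, add_sub_assoc]

variable {α : Type*} [MulAction G α] (hfree : ∀ s ∈ ({a, b, c} : Set G), ∀ x : α, s • x ≠ x)
include hfree

lemma smul_ne_of_hasRotationPart_one {g : G} (hg : HasRotationPart a b g 1) (x : α) :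
    g • x ≠ x := by
  obtain ⟨y, s, hs, rfl⟩ := h.exists_conj_of_hasRotationPart_one hg
  intro hx
  apply hfree s hs (y⁻¹ • x)
  conv_rhs => rw [← hx]
  rw [smul_smul, smul_smul]
  group

lemma eq_zero_of_hasRotationPart_of_smul_eq {g : G} {k : ZMod 3} (hg : HasRotationPart a b g k)
    {x : α} (hx : g • x = x) : k = 0 := by
  fin_cases k
  · rfl
  · exact absurd hx (h.smul_ne_of_hasRotationPart_one hfree hg x)
  · exact absurd (inv_smul_eq_iff.mpr hx.symm)
      (h.smul_ne_of_hasRotationPart_one hfree (h.hasRotationPart_inv hg) x)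

theorem exists_colouring [Nonempty α]
    (htrans : ∀ x y : α, ∃ g ∈ Subgroup.closure {a, b, c}, g • x = y) :
    ∃ col : α → ZMod 3, ∀ s ∈ ({a, b, c} : Set G), ∀ x, col (s • x) = col x + 1 := by
  obtain ⟨x₀⟩ := ‹Nonempty α›
  have hreach : ∀ x, ∃ g k, HasRotationPart a b g k ∧ g • x₀ = x := fun x ↦ by
    obtain ⟨g, hg, hgx⟩ := htrans x₀ x
    obtain ⟨k, hk⟩ := h.exists_hasRotationPart_of_mem_closure hg
    exact ⟨g, k, hk, hgx⟩
  choose g col hcol hgx using hreach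
  refine ⟨col, fun s hs x ↦ ?_⟩
  have hloop : ((g (s • x))⁻¹ * s * g x) • x₀ = x₀ := by
    rw [mul_smul, mul_smul, hgx, inv_smul_eq_iff, hgx]
  have := h.eq_zero_of_hasRotationPart_of_smul_eq hfree
    (h.hasRotationPart_mul (h.hasRotationPart_mul (h.hasRotationPart_inv (hcol (s • x)))
      (h.hasRotationPart_of_mem hs)) (hcol x)) hloop
  linear_combination -this

end TriangleRelations

end TriangleGroup

open TriangleGroup in
theorem exists_three_colouring_general
    {Ω : Type*} [Nonempty Ω] (τ : Fin 3 → Equiv.Perm Ω)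
    (hT1 : ∀ x : Ω, τ 2 (τ 1 (τ 0 x)) = x)
    (hT3 : ∀ i : Fin 3, ∀ x : Ω, τ i x ≠ x)
    (hT4 : ∀ x y : Ω, ∃ g ∈ Subgroup.closure {τ 0, τ 1, τ 2}, g x = y)
    (hcube : ∀ i : Fin 3, τ i ^ 3 = 1) :
    ∃ c : Ω → ZMod 3, ∀ i : Fin 3, ∀ x : Ω, c (τ i x) = c x + 1 := by
  have hrel : TriangleRelations (τ 0) (τ 1) (τ 2) :=
    ⟨hcube 0, hcube 1, hcube 2, Equiv.ext hT1⟩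
  have hfree : ∀ s ∈ ({τ 0, τ 1, τ 2} : Set (Equiv.Perm Ω)), ∀ x : Ω, s • x ≠ x := by
    rintro s (rfl | rfl | rfl) x
    exacts [hT3 0 x, hT3 1 x, hT3 2 x]
  obtain ⟨c, hc⟩ := hrel.exists_colouring hfree hT4
  refine ⟨c, fun i x ↦ hc (τ i) ?_ x⟩
  fin_cases i <;> simp

/-- Let `τ₁, τ₂, τ₃` be permutations of a finite nonempty set `Ω` satisfying
(T1) `τ₁τ₂τ₃ = 1`, (T2) cycles of distinct `τᵢ`, `τⱼ` meet in at most one point,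
(T3) each `τᵢ` is fixed-point free, (T4) `⟨τ₁, τ₂, τ₃⟩` is transitive on `Ω`,
and additionally `τ₁³ = τ₂³ = τ₃³ = 1`. Then there is a colouring
`c : Ω → ℤ/3ℤ` with `c(τᵢ(x)) = c(x) + 1` for all `x` and `i`. -/
theorem exists_three_colouring
    {Ω : Type*} [Finite Ω] [Nonempty Ω] (τ : Fin 3 → Equiv.Perm Ω)
    (hT1 : ∀ x : Ω, τ 2 (τ 1 (τ 0 x)) = x)
    (hT2 : ∀ i j : Fin 3, i ≠ j → ∀ x y : Ω,
      (τ i).SameCycle x y → (τ j).SameCycle x y → x = y)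
    (hT3 : ∀ i : Fin 3, ∀ x : Ω, τ i x ≠ x)
    (hT4 : ∀ x y : Ω, ∃ g ∈ Subgroup.closure {τ 0, τ 1, τ 2}, g x = y)
    (hcube : ∀ i : Fin 3, τ i ^ 3 = 1) :
    ∃ c : Ω → ZMod 3, ∀ i : Fin 3, ∀ x : Ω, c (τ i x) = c x + 1 :=
  exists_three_colouring_general τ hT1 hT3 hT4 hcube
end

section
/- Let Ω be a finite nonempty set and τ₁, τ₂, τ₃ permutations of Ω satisfying (T1), (T2), (T3), (T4), and additionally τ₁³ = τ₂³ = τ₃³ = 1. Then Ω can be partitioned into three pairwise disjoint sets 𝔗₁, 𝔗₂, 𝔗₃ with Ω = 𝔗₁ ∪ 𝔗₂ ∪ 𝔗₃ such that for each i ∈ {1,2,3}, each j ∈ {1,2,3}, and each orbit o of τⱼ on Ω, the set 𝔗ᵢ intersects o in exactly one point. -/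
/-!
Write `a, b, c` for `τ 0, τ 1, τ 2`: they satisfy the relations `a³ = b³ = c³ = c b a = 1` of the
(3,3,3) triangle group. The translations `u = b a⁻¹` and `w = c a⁻¹` commute, conjugation by `a`
rotates the lattice `{uᵐ wⁿ}` by a rotation `ρ` of order 3, and every element of `⟨a, b, c⟩` has
the form `uᵐ wⁿ aᵏ`. Conjugating `uᵐ wⁿ a` by translations moves `(m, n)` through the image of
`1 - ρ`, a sublattice of index 3 whose three cosets are represented by `a`, `b = u a` and
`c = w a`; hence every `uᵐ wⁿ aᵏ` with `3 ∤ k` is conjugate to a generator or its inverse and so is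
fixed-point free. By transitivity, `k mod 3` is then a well-defined colour of the point
`uᵐ wⁿ aᵏ x₀`, every `τ j` raises the colour by one, and the three colour classes are the
transversals.
-/

section TriangleGroup

variable {G : Type*} [Group G]

lemma mul_self_eq_inv_of_pow_three_eq_one {x : G} (hx : x ^ 3 = 1) : x * x = x⁻¹ :=
  (inv_eq_of_mul_eq_one_right (by rw [← pow_three, hx])).symm

lemma inv_mul_inv_self_of_pow_three_eq_one {x : G} (hx : x ^ 3 = 1) : x⁻¹ * x⁻¹ = x := by
  rw [← mul_inv_rev, mul_self_eq_inv_of_pow_three_eq_one hx, inv_inv]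

lemma zpow_eq_zpow_of_pow_eq_one {x : G} {n : ℕ} (hx : x ^ n = 1) {k l : ℤ} (hkl : k ≡ l [ZMOD n]) :
    x ^ k = x ^ l :=
  zpow_eq_zpow_iff_modEq.2 (hkl.of_dvd (mod_cast orderOf_dvd_of_pow_eq_one hx))

structure IsTriangleTriple (a b c : G) : Prop where
  pow_left : a ^ 3 = 1
  pow_mid : b ^ 3 = 1
  pow_right : c ^ 3 = 1
  mul_mul_eq_one : c * b * a = 1

namespace IsTriangleTriple

variable {a b c : G}

lemma inv_right_eq_mul (h : IsTriangleTriple a b c) : c⁻¹ = b * a :=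
  inv_eq_of_mul_eq_one_right (by rw [← mul_assoc]; exact h.mul_mul_eq_one)

lemma right_eq_inv_mul_inv (h : IsTriangleTriple a b c) : c = a⁻¹ * b⁻¹ := by
  rw [← mul_inv_rev, ← h.inv_right_eq_mul, inv_inv]

lemma right_mul_inv_left (h : IsTriangleTriple a b c) : c * a⁻¹ = b * a * b := by
  rw [← inv_mul_inv_self_of_pow_three_eq_one h.pow_right, h.inv_right_eq_mul]
  group

lemma semiconjBy_left_mid_mul_inv (h : IsTriangleTriple a b c) :
    SemiconjBy a (b * a⁻¹) (c * a⁻¹)⁻¹ := by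
  rw [SemiconjBy, mul_inv_rev, inv_inv, h.inv_right_eq_mul,
    ← mul_self_eq_inv_of_pow_three_eq_one h.pow_left]
  group

lemma semiconjBy_left_right_mul_inv (h : IsTriangleTriple a b c) :
    SemiconjBy a (c * a⁻¹) (b * a⁻¹ * (c * a⁻¹)⁻¹) := by
  calc a * (c * a⁻¹) = b⁻¹ * a⁻¹ := by rw [h.right_eq_inv_mul_inv]; group
  _ = b * c⁻¹ * a := by
    rw [h.inv_right_eq_mul, ← mul_self_eq_inv_of_pow_three_eq_one h.pow_mid,
      ← mul_self_eq_inv_of_pow_three_eq_one h.pow_left]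
    group
  _ = b * a⁻¹ * (c * a⁻¹)⁻¹ * a := by group

lemma commute_mid_mul_inv_right_mul_inv (h : IsTriangleTriple a b c) :
    Commute (b * a⁻¹) (c * a⁻¹) :=
  calc b * a⁻¹ * (c * a⁻¹) = b * (a⁻¹ * a⁻¹) * b⁻¹ * a⁻¹ := by
        rw [h.right_eq_inv_mul_inv]; group
  _ = b * a * b * (b * a⁻¹) := by
    rw [inv_mul_inv_self_of_pow_three_eq_one h.pow_left,
      ← mul_self_eq_inv_of_pow_three_eq_one h.pow_mid]
    group
  _ = c * a⁻¹ * (b * a⁻¹) := by rw [h.right_mul_inv_left]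

def transl (a b c : G) (m n : ℤ) : G := (b * a⁻¹) ^ m * (c * a⁻¹) ^ n

lemma transl_mul_transl (h : IsTriangleTriple a b c) (m n p q : ℤ) :
    transl a b c m n * transl a b c p q = transl a b c (m + p) (n + q) := by
  simp only [transl, zpow_add]
  rw [mul_assoc, ← mul_assoc ((c * a⁻¹) ^ n),
    (h.commute_mid_mul_inv_right_mul_inv.zpow_zpow p n).eq.symm]
  group

lemma transl_inv (h : IsTriangleTriple a b c) (m n : ℤ) :
    (transl a b c m n)⁻¹ = transl a b c (-m) (-n) := by
  rw [transl, transl, mul_inv_rev, ← zpow_neg, ← zpow_neg]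
  exact (h.commute_mid_mul_inv_right_mul_inv.zpow_zpow (-m) (-n)).eq.symm

lemma left_mul_transl (h : IsTriangleTriple a b c) (m n : ℤ) :
    a * transl a b c m n = transl a b c n (-m - n) * a := by
  have hu := h.semiconjBy_left_mid_mul_inv.zpow_right m
  have hw := h.semiconjBy_left_right_mul_inv.zpow_right n
  rw [(h.commute_mid_mul_inv_right_mul_inv.inv_right).mul_zpow, inv_zpow'] at hw
  rw [inv_zpow'] at hu
  simp only [transl]
  rw [← mul_assoc, hu.eq, mul_assoc, hw.eq, sub_eq_add_neg, zpow_add]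
  rw [← mul_assoc, ← mul_assoc, (h.commute_mid_mul_inv_right_mul_inv.zpow_zpow n (-m)).eq.symm]
  group

lemma inv_left_mul_transl (h : IsTriangleTriple a b c) (m n : ℤ) :
    a⁻¹ * transl a b c m n = transl a b c (-m - n) m * a⁻¹ := by
  rw [inv_mul_eq_iff_eq_mul, ← mul_assoc, left_mul_transl h, mul_inv_cancel_right,
    show -(-m - n) - m = n by ring]

lemma exists_zpow_mul_transl (h : IsTriangleTriple a b c) (k m n : ℤ) :
    ∃ p q, a ^ k * transl a b c m n = transl a b c p q * a ^ k := by
  induction k using Int.induction_on generalizing m n with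
  | zero => exact ⟨m, n, by simp⟩
  | succ k ih =>
    obtain ⟨p, q, hpq⟩ := ih n (-m - n)
    refine ⟨p, q, ?_⟩
    rw [zpow_add_one, mul_assoc, left_mul_transl h, ← mul_assoc, hpq, mul_assoc]
  | pred k ih =>
    obtain ⟨p, q, hpq⟩ := ih (-m - n) m
    refine ⟨p, q, ?_⟩
    rw [zpow_sub_one, mul_assoc, inv_left_mul_transl h, ← mul_assoc, hpq, mul_assoc]

lemma exists_transl_mul_zpow_mul_transl_mul_zpow (h : IsTriangleTriple a b c)
    (m n j m' n' k : ℤ) :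
    ∃ p q, transl a b c m n * a ^ j * (transl a b c m' n' * a ^ k) =
      transl a b c p q * a ^ (j + k) := by
  obtain ⟨p, q, hpq⟩ := h.exists_zpow_mul_transl j m' n'
  refine ⟨m + p, n + q, ?_⟩
  rw [← transl_mul_transl h, zpow_add, mul_assoc, ← mul_assoc (a ^ j), hpq]
  group

lemma exists_inv_transl_mul_zpow (h : IsTriangleTriple a b c) (m n k : ℤ) :
    ∃ p q, (transl a b c m n * a ^ k)⁻¹ = transl a b c p q * a ^ (-k) := by
  obtain ⟨p, q, hpq⟩ := h.exists_zpow_mul_transl (-k) (-m) (-n)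
  exact ⟨p, q, by rw [mul_inv_rev, transl_inv h, ← zpow_neg, hpq]⟩

lemma transl_conj (h : IsTriangleTriple a b c) (m n p q : ℤ) :
    transl a b c p q * (transl a b c m n * a) * (transl a b c p q)⁻¹ =
      transl a b c (m + p - q) (n + p + 2 * q) * a := by
  rw [transl_inv h, mul_assoc, mul_assoc, left_mul_transl h, ← mul_assoc, ← mul_assoc,
    transl_mul_transl h, transl_mul_transl h]
  congr 2 <;> ring

lemma isConj_transl_mul_of_modEq (h : IsTriangleTriple a b c) {m n m' n' : ℤ}
    (hmn : m - n ≡ m' - n' [ZMOD 3]) :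
    IsConj (transl a b c m n * a) (transl a b c m' n' * a) := by
  obtain ⟨q, hq⟩ := hmn.dvd
  refine isConj_iff.2 ⟨transl a b c (m' - m - q) (-q), ?_⟩
  rw [transl_conj h]
  congr 2 <;> omega

lemma exists_isConj_transl_mul (h : IsTriangleTriple a b c) (m n : ℤ) :
    ∃ g ∈ ({a, b, c} : Set G), IsConj g (transl a b c m n * a) := by
  obtain ⟨p, q, hpq, hmn⟩ : ∃ p q : ℤ,
      transl a b c p q * a ∈ ({a, b, c} : Set G) ∧ m - n ≡ p - q [ZMOD 3] := by
    rcases (by simp only [Int.ModEq]; omega :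
        m - n ≡ 0 - 0 [ZMOD 3] ∨ m - n ≡ 1 - 0 [ZMOD 3] ∨ m - n ≡ 0 - 1 [ZMOD 3])
      with hmn | hmn | hmn
    exacts [⟨0, 0, by simp [transl], hmn⟩, ⟨1, 0, by simp [transl], hmn⟩,
      ⟨0, 1, by simp [transl], hmn⟩]
  exact ⟨_, hpq, (h.isConj_transl_mul_of_modEq hmn).symm⟩

lemma exists_eq_transl_mul_of_mem {g : G} (hg : g ∈ ({a, b, c} : Set G)) :
    ∃ p q, g = transl a b c p q * a := by
  rcases hg with rfl | rfl | rfl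
  exacts [⟨0, 0, by simp [transl]⟩, ⟨1, 0, by simp [transl]⟩, ⟨0, 1, by simp [transl]⟩]

lemma exists_transl_mul_mul_transl_mul_zpow (h : IsTriangleTriple a b c) (p q m n k : ℤ) :
    ∃ r s, transl a b c p q * a * (transl a b c m n * a ^ k) =
      transl a b c r s * a ^ (1 + k) := by
  simpa only [zpow_one] using h.exists_transl_mul_zpow_mul_transl_mul_zpow p q 1 m n k

lemma exists_eq_transl_mul_zpow_of_mem_closure (h : IsTriangleTriple a b c) {g : G}
    (hg : g ∈ Subgroup.closure {a, b, c}) : ∃ m n k : ℤ, g = transl a b c m n * a ^ k := by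
  induction hg using Subgroup.closure_induction_left with
  | one => exact ⟨0, 0, 0, by simp [transl]⟩
  | mul_left x hx y _ ih =>
    obtain ⟨p, q, rfl⟩ := exists_eq_transl_mul_of_mem hx
    obtain ⟨m, n, k, rfl⟩ := ih
    obtain ⟨r, s, hrs⟩ := h.exists_transl_mul_mul_transl_mul_zpow p q m n k
    exact ⟨r, s, 1 + k, hrs⟩
  | inv_mul_cancel x hx y _ ih =>
    obtain ⟨p, q, rfl⟩ := exists_eq_transl_mul_of_mem hx
    obtain ⟨m, n, k, rfl⟩ := ih
    obtain ⟨p', q', hpq⟩ := h.exists_inv_transl_mul_zpow p q 1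
    obtain ⟨r, s, hrs⟩ := h.exists_transl_mul_zpow_mul_transl_mul_zpow p' q' (-1) m n k
    rw [zpow_one] at hpq
    exact ⟨r, s, -1 + k, by rwa [hpq]⟩

section MulAction

open MulAction

variable {α : Type*} [MulAction G α]

lemma fixedBy_transl_mul_zpow_eq_empty (h : IsTriangleTriple a b c)
    (hfix : ∀ g ∈ ({a, b, c} : Set G), fixedBy α g = ∅) {k : ℤ} (hk : ¬ (3 : ℤ) ∣ k) (m n : ℤ) :
    fixedBy α (transl a b c m n * a ^ k) = ∅ := by
  have hrot : ∀ p q, fixedBy α (transl a b c p q * a) = ∅ := by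
    intro p q
    obtain ⟨g, hg, hconj⟩ := h.exists_isConj_transl_mul p q
    obtain ⟨x, hx⟩ := isConj_iff.1 hconj
    rw [← hx, ← smul_fixedBy, hfix g hg, Set.smul_set_empty]
  rcases (by simp only [Int.ModEq]; omega : k ≡ 1 [ZMOD 3] ∨ -k ≡ 1 [ZMOD 3]) with hk1 | hk1
  · rw [zpow_eq_zpow_of_pow_eq_one h.pow_left hk1, zpow_one, hrot]
  · obtain ⟨p, q, hpq⟩ := h.exists_inv_transl_mul_zpow m n k
    rw [← fixedBy_inv, hpq, zpow_eq_zpow_of_pow_eq_one h.pow_left hk1, zpow_one, hrot]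

theorem exists_grading (h : IsTriangleTriple a b c)
    (hfix : ∀ g ∈ ({a, b, c} : Set G), fixedBy α g = ∅) (x₀ : α)
    (htrans : ∀ x, ∃ g ∈ Subgroup.closure {a, b, c}, g • x₀ = x) :
    ∃ f : α → ZMod 3, ∀ g ∈ ({a, b, c} : Set G), ∀ x, f (g • x) = f x + 1 := by
  let e : ℤ × ℤ × ℤ → α := fun i => (transl a b c i.1 i.2.1 * a ^ i.2.2) • x₀
  let d : ℤ × ℤ × ℤ → ZMod 3 := fun i => i.2.2
  have he : e.Surjective := fun x => by
    obtain ⟨g, hg, rfl⟩ := htrans x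
    obtain ⟨m, n, k, rfl⟩ := h.exists_eq_transl_mul_zpow_of_mem_closure hg
    exact ⟨(m, n, k), rfl⟩
  have hd : d.FactorsThrough e := by
    rintro ⟨m, n, k⟩ ⟨m', n', k'⟩ hmnk
    obtain ⟨p, q, hpq⟩ := h.exists_inv_transl_mul_zpow m n k
    obtain ⟨r, s, hrs⟩ := h.exists_transl_mul_zpow_mul_transl_mul_zpow p q (-k) m' n' k'
    have hfixed : x₀ ∈ fixedBy α (transl a b c r s * a ^ (-k + k')) := by
      rw [mem_fixedBy, ← hrs, ← hpq, mul_smul, inv_smul_eq_iff]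
      exact hmnk.symm
    refine (ZMod.intCast_eq_intCast_iff_dvd_sub k k' 3).2 ?_
    by_contra hk
    rw [fixedBy_transl_mul_zpow_eq_empty h hfix (by rwa [neg_add_eq_sub]) r s] at hfixed
    exact hfixed
  refine ⟨Function.extend e d 0, fun g hg x => ?_⟩
  obtain ⟨⟨m, n, k⟩, rfl⟩ := he x
  obtain ⟨p, q, rfl⟩ := exists_eq_transl_mul_of_mem hg
  obtain ⟨r, s, hrs⟩ := h.exists_transl_mul_mul_transl_mul_zpow p q m n k
  have hgx : (transl a b c p q * a) • e (m, n, k) = e (r, s, 1 + k) := by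
    simp only [e, ← mul_smul, hrs]
  rw [hgx, hd.extend_apply, hd.extend_apply]
  push_cast [d]
  ring

end MulAction

end IsTriangleTriple

end TriangleGroup

namespace Equiv.Perm

variable {α R : Type*} [AddCommGroupWithOne R] {σ : Perm α} {f : α → R}

lemma zpow_apply_eq_add_of_apply_eq_add_one (hf : ∀ x, f (σ x) = f x + 1) (i : ℤ) (x : α) :
    f ((σ ^ i) x) = f x + i := by
  induction i using Int.induction_on generalizing x with
  | zero => simp
  | succ i ih =>
    rw [zpow_add_one, mul_apply, ih, hf]
    push_cast
    abel
  | pred i ih =>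
    have hinv : f (σ⁻¹ x) = f x - 1 := by
      rw [eq_sub_iff_add_eq, ← hf, coe_inv, apply_symm_apply]
    rw [zpow_sub_one, mul_apply, ih, hinv]
    push_cast
    abel

lemma existsUnique_sameCycle_of_apply_eq_add_one {n : ℕ} {f : α → ZMod n} (hσ : σ ^ n = 1)
    (hf : ∀ x, f (σ x) = f x + 1) (x : α) (r : ZMod n) : ∃! y, f y = r ∧ σ.SameCycle x y := by
  have hσz (i : ℤ) : f ((σ ^ i) x) = f x + i := zpow_apply_eq_add_of_apply_eq_add_one hf i x
  refine ⟨(σ ^ (r - f x).cast) x, ⟨?_, _, rfl⟩, ?_⟩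
  · rw [hσz, ZMod.intCast_zmod_cast, add_sub_cancel]
  · rintro _ ⟨hy, i, rfl⟩
    refine congrFun (congrArg _ (zpow_eq_zpow_of_pow_eq_one hσ ?_)) x
    refine (ZMod.intCast_eq_intCast_iff _ _ n).1 ?_
    rw [ZMod.intCast_zmod_cast, ← hy, hσz]
    ring

end Equiv.Perm

theorem partition_into_three_orbit_transversals_general
    {Ω : Type*} [Nonempty Ω] (τ : Fin 3 → Equiv.Perm Ω)
    (hT1 : ∀ x : Ω, τ 2 (τ 1 (τ 0 x)) = x)
    (hT3 : ∀ i : Fin 3, ∀ x : Ω, τ i x ≠ x)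
    (hT4 : ∀ x y : Ω, ∃ g ∈ Subgroup.closure {τ 0, τ 1, τ 2}, g x = y)
    (hcube : ∀ i : Fin 3, τ i ^ 3 = 1) :
    ∃ S : Fin 3 → Set Ω,
      (∀ i j : Fin 3, i ≠ j → S i ∩ S j = ∅) ∧
      (S 0 ∪ S 1 ∪ S 2 = Set.univ) ∧
      (∀ i j : Fin 3, ∀ x : Ω, ∃! y : Ω, y ∈ S i ∧ (τ j).SameCycle x y) := by
  obtain ⟨x₀⟩ := ‹Nonempty Ω›
  have hτ : IsTriangleTriple (τ 0) (τ 1) (τ 2) :=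
    ⟨hcube 0, hcube 1, hcube 2, Equiv.ext hT1⟩
  obtain ⟨f, hf⟩ := hτ.exists_grading
    (by rintro g (rfl | rfl | rfl) <;> exact Set.eq_empty_of_forall_notMem (hT3 _)) x₀ (hT4 x₀)
  let e := ZMod.finEquiv 3
  refine ⟨fun i => f ⁻¹' {e i}, fun i j hij => ?_, ?_, fun i j x => ?_⟩
  · ext x
    simpa using fun hi hj => hij (e.injective (hi.symm.trans hj))
  · ext x
    obtain ⟨i, hi⟩ := e.surjective (f x)
    fin_cases i <;> simp [← hi]
  · exact (τ j).existsUnique_sameCycle_of_apply_eq_add_one (hcube j)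
      (fun y => hf (τ j) (by fin_cases j <;> simp) y) x (e i)

/-- Let `τ₁, τ₂, τ₃` be permutations of a finite nonempty set `Ω` satisfying
(T1) `τ₁τ₂τ₃ = 1`, (T2) cycles of distinct `τᵢ`, `τⱼ` meet in at most one point,
(T3) each `τᵢ` is fixed-point free, (T4) `⟨τ₁, τ₂, τ₃⟩` is transitive on `Ω`,
and additionally `τ₁³ = τ₂³ = τ₃³ = 1`. Then `Ω` can be partitioned into three
pairwise disjoint sets `𝔗₁, 𝔗₂, 𝔗₃` each of which meets each orbit of each `τⱼ`
in exactly one point. -/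
theorem partition_into_three_orbit_transversals
    {Ω : Type*} [Finite Ω] [Nonempty Ω] (τ : Fin 3 → Equiv.Perm Ω)
    (hT1 : ∀ x : Ω, τ 2 (τ 1 (τ 0 x)) = x)
    (hT2 : ∀ i j : Fin 3, i ≠ j → ∀ x y : Ω,
      (τ i).SameCycle x y → (τ j).SameCycle x y → x = y)
    (hT3 : ∀ i : Fin 3, ∀ x : Ω, τ i x ≠ x)
    (hT4 : ∀ x y : Ω, ∃ g ∈ Subgroup.closure {τ 0, τ 1, τ 2}, g x = y)
    (hcube : ∀ i : Fin 3, τ i ^ 3 = 1) :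
    ∃ S : Fin 3 → Set Ω,
      (∀ i j : Fin 3, i ≠ j → S i ∩ S j = ∅) ∧
      (S 0 ∪ S 1 ∪ S 2 = Set.univ) ∧
      (∀ i j : Fin 3, ∀ x : Ω, ∃! y : Ω, y ∈ S i ∧ (τ j).SameCycle x y) :=
  partition_into_three_orbit_transversals_general τ hT1 hT3 hT4 hcube
end
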